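/- arXiv:2205.12246 — 9 statements merged into one kernel-verified Lean document; each statement's English description precedes it below -/
import Mathlib

section
/- Let G be a simple graph on n vertices. For each edge e of G, let c(e) denote the largest integer r such that e is an edge of a subgraph of G isomorphic to the complete graph K_r. Then the sum over all edges e of G of c(e)/(c(e)-1) is at most n²/2. -/
/-!
Double count: `∑_e c(e)/(c(e)-1)` is half the sum of the weights `c(uv)/(c(uv)-1)` over ordered
adjacent pairs, and by induction on a vertex set `s` the pairs inside `s` carry total weight at
most `|s|²`. Take a largest clique `K ⊆ s`. A vertex `u` with `k` neighbours in `K` spans a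
`(k+1)`-clique with them, so each of those `k` edges has weight at most `(k+1)/k`; since
`k + 1 ≤ |K|`, every vertex sends weight at most `|K|` into `K`. Together with the induction
hypothesis on `s \ K` this gives `|s \ K|² + 2|s \ K||K| + |K|² = |s|²`.
-/

open Finset

lemma natCast_div_sub_one_le_of_le {a b : ℕ} (ha : 2 ≤ a) (hab : a ≤ b) :
    (b : ℝ) / (b - 1) ≤ a / (a - 1) := by
  have ha' : (2 : ℝ) ≤ a := by exact_mod_cast ha
  have hab' : (a : ℝ) ≤ b := by exact_mod_cast hab
  rw [div_le_div_iff₀ (by linarith) (by linarith)]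
  nlinarith

namespace SimpleGraph

variable {V : Type*} (G : SimpleGraph V)

lemma exists_isClique_subset_forall_card_le (s : Finset V) :
    ∃ K ⊆ s, G.IsClique (K : Set V) ∧ ∀ t ⊆ s, G.IsClique (t : Set V) → #t ≤ #K := by
  classical
  obtain ⟨K, hK, hmax⟩ :=
    exists_max_image (s.powerset.filter fun t : Finset V => G.IsClique (t : Set V)) card
      ⟨∅, by simp⟩
  rw [mem_filter, mem_powerset] at hK
  exact ⟨K, hK.1, hK.2, fun t hts ht => hmax t (by simpa [mem_filter] using ⟨hts, ht⟩)⟩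

variable [DecidableRel G.Adj]

theorem two_nsmul_sum_edgeFinset {M : Type*} [AddCommMonoid M] [Fintype V] [DecidableEq V]
    (f : Sym2 V → M) :
    2 • ∑ e ∈ G.edgeFinset, f e = ∑ u, ∑ v, if G.Adj u v then f s(u, v) else 0 := by
  calc 2 • ∑ e ∈ G.edgeFinset, f e
      = ∑ e ∈ G.edgeFinset, ∑ d : G.Dart with d.edge = e, f d.edge := by
        rw [smul_sum]
        refine sum_congr rfl fun e he => ?_
        rw [sum_congr rfl fun d hd => congrArg f (mem_filter.1 hd).2, sum_const,
          G.dart_edge_fiber_card e (mem_edgeFinset.1 he)]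
    _ = ∑ d : G.Dart, f d.edge :=
        sum_fiberwise_of_maps_to (g := Dart.edge) (fun d _ => mem_edgeFinset.2 d.edge_mem) _
    _ = ∑ p : V × V with G.Adj p.1 p.2, f s(p.1, p.2) :=
        sum_bij (fun d _ => d.toProd) (fun d _ => mem_filter.2 ⟨mem_univ _, d.adj⟩)
          (fun d₁ _ d₂ _ h => Dart.ext _ _ h)
          (fun p hp => ⟨⟨p, (mem_filter.1 hp).2⟩, mem_univ _, rfl⟩) fun _ _ => rfl
    _ = ∑ u, ∑ v, if G.Adj u v then f s(u, v) else 0 := by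
        rw [sum_filter, Fintype.sum_prod_type]

noncomputable def edgeWeight (c : Sym2 V → ℕ) (u v : V) : ℝ :=
  if G.Adj u v then (c s(u, v) : ℝ) / (c s(u, v) - 1) else 0

lemma edgeWeight_comm (c : Sym2 V → ℕ) (u v : V) : G.edgeWeight c u v = G.edgeWeight c v u := by
  simp only [edgeWeight, G.adj_comm u v, Sym2.eq_swap]

variable [DecidableEq V] {c : Sym2 V → ℕ}

lemma isClique_insert_filter_adj {K : Finset V} (hK : G.IsClique (K : Set V)) (u : V) :
    G.IsClique ((insert u {v ∈ K | G.Adj u v} : Finset V) : Set V) := by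
  rw [coe_insert]
  exact (hK.subset (filter_subset _ _)).insert fun v hv _ => (mem_filter.1 hv).2

lemma sum_edgeWeight_le
    (hc : ∀ t : Finset V, G.IsClique (t : Set V) → ∀ u ∈ t, ∀ v ∈ t, u ≠ v → #t ≤ c s(u, v))
    {K : Finset V} (hK : G.IsClique (K : Set V)) (u : V) :
    ∑ v ∈ K, G.edgeWeight c u v ≤ #(insert u {v ∈ K | G.Adj u v}) := by
  set F := {v ∈ K | G.Adj u v}
  have huF : u ∉ F := fun h => G.irrefl (mem_filter.1 h).2
  have hsum : ∑ v ∈ K, G.edgeWeight c u v = ∑ v ∈ F, (c s(u, v) : ℝ) / (c s(u, v) - 1) := by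
    simp only [edgeWeight, F, sum_filter]
  rw [hsum, card_insert_of_notMem huF, Nat.cast_succ]
  rcases F.eq_empty_or_nonempty with hF₀ | ⟨v₀, hv₀⟩
  · rw [hF₀, sum_empty]
    positivity
  have hterm : ∀ v ∈ F,
      (c s(u, v) : ℝ) / (c s(u, v) - 1) ≤ ((#F + 1 : ℕ) : ℝ) / ((#F + 1 : ℕ) - 1) :=
    fun v hv => natCast_div_sub_one_le_of_le (Nat.succ_le_succ (card_pos.2 ⟨v₀, hv₀⟩)) <| by
      simpa [card_insert_of_notMem huF] using
        hc _ (G.isClique_insert_filter_adj hK u) u (mem_insert_self u F) v (mem_insert_of_mem hv)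
          (ne_of_mem_of_not_mem hv huF).symm
  have hF₁ : (#F : ℝ) ≠ 0 := by exact_mod_cast (card_pos.2 ⟨v₀, hv₀⟩).ne'
  calc ∑ v ∈ F, (c s(u, v) : ℝ) / (c s(u, v) - 1)
      ≤ #F • (((#F + 1 : ℕ) : ℝ) / ((#F + 1 : ℕ) - 1)) := sum_le_card_nsmul _ _ _ hterm
    _ = #F + 1 := by
        rw [nsmul_eq_mul, Nat.cast_succ, add_sub_cancel_right, mul_div_cancel₀ _ hF₁]

theorem sum_sum_edgeWeight_le_sq
    (hc : ∀ t : Finset V, G.IsClique (t : Set V) → ∀ u ∈ t, ∀ v ∈ t, u ≠ v → #t ≤ c s(u, v))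
    (s : Finset V) : ∑ u ∈ s, ∑ v ∈ s, G.edgeWeight c u v ≤ (#s : ℝ) ^ 2 := by
  induction s using strongInduction with
  | H s ih =>
  rcases s.eq_empty_or_nonempty with rfl | ⟨a, ha⟩
  · simp
  obtain ⟨K, hKs, hK, hmax⟩ := G.exists_isClique_subset_forall_card_le s
  have hK₀ : K.Nonempty :=
    card_pos.1 <| hmax {a} (singleton_subset_iff.2 ha) (by simp) |>.trans_lt' one_pos
  have hrow : ∀ u ∈ s, ∑ v ∈ K, G.edgeWeight c u v ≤ #K := fun u hu =>
    (G.sum_edgeWeight_le hc hK u).trans <| Nat.cast_le.2 <|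
      hmax _ (insert_subset hu ((filter_subset _ _).trans hKs)) (G.isClique_insert_filter_adj hK u)
  have hinner : ∑ u ∈ s \ K, ∑ v ∈ s \ K, G.edgeWeight c u v ≤ (#(s \ K) : ℝ) ^ 2 :=
    ih _ (sdiff_ssubset hKs hK₀)
  have hcross : ∑ u ∈ K, ∑ v ∈ s \ K, G.edgeWeight c u v ≤ #(s \ K) * #K := by
    rw [sum_comm]
    simp_rw [G.edgeWeight_comm c _]
    simpa using sum_le_sum fun u hu => hrow u (mem_sdiff.1 hu).1
  have hintoK : ∑ u ∈ s, ∑ v ∈ K, G.edgeWeight c u v ≤ #s * #K := by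
    simpa using sum_le_sum hrow
  have hcard : (#s : ℝ) = #(s \ K) + #K := by
    exact_mod_cast (card_sdiff_add_card_eq_card hKs).symm
  calc ∑ u ∈ s, ∑ v ∈ s, G.edgeWeight c u v
      = ∑ u ∈ s \ K, ∑ v ∈ s \ K, G.edgeWeight c u v + ∑ u ∈ K, ∑ v ∈ s \ K, G.edgeWeight c u v
          + ∑ u ∈ s, ∑ v ∈ K, G.edgeWeight c u v := by
        rw [sum_sdiff hKs, ← sum_add_distrib]
        exact sum_congr rfl fun u _ => (sum_sdiff hKs).symm
    _ ≤ (#s : ℝ) ^ 2 := by rw [hcard] at hintoK ⊢; nlinarith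

end SimpleGraph

/-- **Localized Turán theorem.** For any simple graph `G` on `n` vertices, where `c e` is the
largest `r` such that edge `e` lies in a copy of `K_r`, we have
`∑_{e ∈ E(G)} c(e)/(c(e)-1) ≤ n²/2`. -/
theorem localized_turan {V : Type*} [Fintype V] [DecidableEq V]
    (G : SimpleGraph V) [DecidableRel G.Adj]
    (c : Sym2 V → ℕ)
    (hc : ∀ e ∈ G.edgeFinset,
      IsGreatest {r : ℕ | ∃ t : Finset V, G.IsNClique r t ∧ ∀ v ∈ e, v ∈ t} (c e)) :
    ∑ e ∈ G.edgeFinset, (c e : ℝ) / ((c e : ℝ) - 1) ≤ (Fintype.card V : ℝ) ^ 2 / 2 := by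
  have hclique : ∀ t : Finset V, G.IsClique (t : Set V) → ∀ u ∈ t, ∀ v ∈ t, u ≠ v →
      #t ≤ c s(u, v) := fun t ht u hu v hv huv =>
    (hc _ (SimpleGraph.mem_edgeFinset.2 (ht hu hv huv))).2
      ⟨t, ⟨ht, rfl⟩, fun w hw => by rcases Sym2.mem_iff.1 hw with rfl | rfl <;> assumption⟩
  have hsum := G.two_nsmul_sum_edgeFinset fun e => (c e : ℝ) / ((c e : ℝ) - 1)
  have hbound := G.sum_sum_edgeWeight_le_sq hclique univ
  rw [card_univ] at hbound
  simp only [SimpleGraph.edgeWeight] at hbound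
  rw [nsmul_eq_mul] at hsum
  push_cast at hsum
  linarith
end

section
/- Let 𝒜 be a family of subsets of {1,…,n}. For each A ∈ 𝒜, let c(A) denote the largest integer k such that A belongs to a chain A₁ ⊊ A₂ ⊊ … ⊊ A_k of k sets all lying in 𝒜. Then the sum over all A ∈ 𝒜 of 1/(C(n, |A|) · c(A)) is at most 1. -/
/-!
A permutation `σ` of `[n]` determines the maximal chain `∅ = S₀ ⊂ S₁ ⊂ ⋯ ⊂ Sₙ = [n]`, where
`Sₖ = σ.initSeg k` consists of the elements that `σ` sends below `k`. A set `A` lies on exactly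
`|A|! (n - |A|)! = n! / C(n, |A|)` of these chains. The members of `𝒜` lying on one chain form
a chain of `𝒜`, so if there are `t` of them then each has `c(A) ≥ t`, and their weights `1 / c(A)`
add up to at most `1`. Summing over all `n!` permutations gives the inequality.
-/

open Finset Nat

section Chains

variable {β : Type*} [Preorder β]

def chainLengths (𝒜 : Finset β) (a : β) : Set ℕ :=
  {k | ∃ f : Fin k → β, StrictMono f ∧ (∀ i, f i ∈ 𝒜) ∧ ∃ i, f i = a}

theorem card_filter_mem_chainLengths [DecidableEq β] {ι : Type*} [LinearOrder ι] [Fintype ι]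
    {g : ι → β} (hg : StrictMono g) (𝒜 : Finset β) {i : ι} (hi : g i ∈ 𝒜) :
    #{j | g j ∈ 𝒜} ∈ chainLengths 𝒜 (g i) := by
  set e := (univ.filter fun j => g j ∈ 𝒜).orderIsoOfFin rfl
  refine ⟨fun j => g (e j), hg.comp (Subtype.strictMono_coe _ |>.comp e.strictMono),
    fun j => (mem_filter.1 (e j).2).2, e.symm ⟨i, by simpa using hi⟩, by simp⟩

end Chains

theorem sum_one_div_le_one_of_card_le {γ : Type*} {T : Finset γ} {c : γ → ℕ}
    (h : ∀ a ∈ T, #T ≤ c a) : ∑ a ∈ T, (1 : ℝ) / c a ≤ 1 := by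
  calc ∑ a ∈ T, (1 : ℝ) / c a ≤ ∑ _a ∈ T, (1 : ℝ) / #T :=
        sum_le_sum fun a ha => one_div_le_one_div_of_le (by exact_mod_cast card_pos.2 ⟨a, ha⟩)
          (by exact_mod_cast h a ha)
    _ ≤ 1 := by
      rw [sum_const, nsmul_eq_mul, mul_one_div]
      exact div_self_le_one _

namespace Equiv.Perm

variable {α : Type*} [Fintype α] [DecidableEq α]

theorem card_comp_eq {ι : Type*} [Fintype ι] [DecidableEq ι] {p q : α → ι}
    (hpq : ∀ i, Fintype.card {a // q a = i} = Fintype.card {a // p a = i}) :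
    Fintype.card {σ : Perm α // p ∘ σ = q} = ∏ i, (Fintype.card {a // q a = i})! := by
  set σ₀ : Perm α := Equiv.ofFiberEquiv fun i => Fintype.equivOfCardEq (hpq i)
  have hσ₀ : p ∘ σ₀ = q := funext (Equiv.ofFiberEquiv_map _)
  rw [← DomMulAct.stabilizer_card q]
  refine Fintype.card_congr (Equiv.subtypeEquiv (Equiv.mulLeft σ₀⁻¹) fun σ => ?_)
  have : q ∘ ⇑(σ₀⁻¹ * σ) = p ∘ σ := by ext a; simp [← hσ₀]
  simp only [Equiv.coe_mulLeft, this]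

theorem card_filter_forall_mem_iff {s t : Finset α} (hst : #s = #t) :
    #{σ : Perm α | ∀ a, σ a ∈ s ↔ a ∈ t} = (#t)! * (Fintype.card α - #t)! := by
  have hcomp (σ : Perm α) :
      (∀ a, σ a ∈ s ↔ a ∈ t) ↔ (fun a => decide (a ∈ s)) ∘ σ = fun a => decide (a ∈ t) := by
    simp [funext_iff]
  rw [← Fintype.card_subtype, Fintype.card_congr (Equiv.subtypeEquivRight hcomp),
    card_comp_eq (fun b => by cases b <;> simp [hst])]
  simp

variable {n : ℕ}

def initSeg (σ : Perm (Fin n)) (k : ℕ) : Finset (Fin n) := {a | (σ a : ℕ) < k}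

theorem mem_initSeg {σ : Perm (Fin n)} {k : ℕ} {a : Fin n} : a ∈ σ.initSeg k ↔ (σ a : ℕ) < k := by
  simp [initSeg]

theorem initSeg_eq_iff {σ : Perm (Fin n)} {k : ℕ} {A : Finset (Fin n)} :
    σ.initSeg k = A ↔ ∀ a, σ a ∈ ({x | (x : ℕ) < k} : Finset (Fin n)) ↔ a ∈ A := by
  simp [Finset.ext_iff, mem_initSeg]

theorem strictMono_initSeg (σ : Perm (Fin n)) : StrictMono fun k : Fin (n + 1) => σ.initSeg k := by
  intro k l hkl
  rw [Finset.ssubset_iff_of_subset fun a ha => by simp only [mem_initSeg] at ha ⊢; omega]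
  refine ⟨σ.symm ⟨k, by omega⟩, ?_, ?_⟩ <;> simp [mem_initSeg, hkl]

theorem card_filter_initSeg_eq (A : Finset (Fin n)) :
    #{σ : Perm (Fin n) | σ.initSeg #A = A} = (#A)! * (n - #A)! := by
  have hcard : #({x | (x : ℕ) < #A} : Finset (Fin n)) = #A := by
    simpa [Fin.card_filter_val_lt] using A.card_le_univ
  simpa only [Fintype.card_fin, ← initSeg_eq_iff] using card_filter_forall_mem_iff hcard

theorem sum_filter_initSeg_one_div_le_one {𝒜 : Finset (Finset (Fin n))}
    {c : Finset (Fin n) → ℕ} (hc : ∀ A ∈ 𝒜, c A ∈ upperBounds (chainLengths 𝒜 A))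
    (σ : Perm (Fin n)) : ∑ A ∈ 𝒜 with σ.initSeg #A = A, (1 : ℝ) / c A ≤ 1 := by
  refine sum_one_div_le_one_of_card_le fun A hA => ?_
  obtain ⟨hA𝒜, hσA⟩ := mem_filter.1 hA
  have hlevel (B : Finset (Fin n)) : #B < n + 1 :=
    Nat.lt_succ_of_le (B.card_le_univ.trans_eq (Fintype.card_fin n))
  have hsub : {B ∈ 𝒜 | σ.initSeg #B = B} ⊆
      ({j | σ.initSeg j ∈ 𝒜} : Finset (Fin (n + 1))).image fun j : Fin (n + 1) => σ.initSeg j := by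
    intro B hB
    obtain ⟨hB𝒜, hσB⟩ := mem_filter.1 hB
    exact mem_image.2 ⟨⟨#B, hlevel B⟩, by simpa [hσB] using hB𝒜, hσB⟩
  have hchain : #{j : Fin (n + 1) | σ.initSeg j ∈ 𝒜} ∈ chainLengths 𝒜 A := by
    simpa [hσA] using
      card_filter_mem_chainLengths σ.strictMono_initSeg 𝒜 (i := ⟨#A, hlevel A⟩) (by simpa [hσA])
  exact (card_le_card hsub).trans (card_image_le.trans (hc A hA𝒜 hchain))

end Equiv.Perm

/-- **Localized LYM inequality.** For any family `𝒜` of subsets of `[n]`, where `c A` is the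
largest `k` such that `A` lies in a chain of `k` sets from `𝒜`, we have
`∑_{A ∈ 𝒜} 1/(C(n,|A|)·c(A)) ≤ 1`. -/
theorem localized_LYM {n : ℕ} (𝒜 : Finset (Finset (Fin n)))
    (c : Finset (Fin n) → ℕ)
    (hc : ∀ A ∈ 𝒜, IsGreatest {k : ℕ | ∃ f : Fin k → Finset (Fin n),
        StrictMono f ∧ (∀ i, f i ∈ 𝒜) ∧ ∃ i, f i = A} (c A)) :
    ∑ A ∈ 𝒜, (1 : ℝ) / ((n.choose A.card : ℝ) * (c A : ℝ)) ≤ 1 := by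
  have hfac : (n ! : ℝ) ≠ 0 := by positivity
  calc ∑ A ∈ 𝒜, (1 : ℝ) / ((n.choose #A : ℝ) * c A)
      = ∑ A ∈ 𝒜, ∑ σ : Equiv.Perm (Fin n) with σ.initSeg #A = A, (1 : ℝ) / (n ! * c A) := by
        refine sum_congr rfl fun A _ => ?_
        rw [sum_const, Equiv.Perm.card_filter_initSeg_eq, nsmul_eq_mul, mul_one_div,
          ← Nat.choose_mul_factorial_mul_factorial (A.card_le_univ.trans_eq (Fintype.card_fin n))]
        push_cast
        field_simp
    _ = ∑ σ : Equiv.Perm (Fin n), ∑ A ∈ 𝒜 with σ.initSeg #A = A, (1 : ℝ) / (n ! * c A) :=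
        sum_comm' fun A σ => by simp [and_comm]
    _ = ∑ σ : Equiv.Perm (Fin n), (1 : ℝ) / n ! * ∑ A ∈ 𝒜 with σ.initSeg #A = A, (1 : ℝ) / c A := by
        simp_rw [mul_sum, one_div_mul_one_div]
    _ ≤ ∑ _σ : Equiv.Perm (Fin n), (1 : ℝ) / n ! :=
        sum_le_sum fun σ _ => mul_le_of_le_one_right (by positivity)
          (σ.sum_filter_initSeg_one_div_le_one fun A hA => (hc A hA).2)
    _ = 1 := by simp [Fintype.card_perm, hfac]
end

section
/- Let 𝒜 ⊆ 2^[n] be a family of subsets of {1,…,n} containing no (k+1)-chain, that is, no k+1 sets of 𝒜 each properly contained in the next. Then the sum over all A ∈ 𝒜 of 1/C(n, |A|) is at most k. -/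
open Finset

lemma antichain_lym {n : ℕ} (ℬ : Finset (Finset (Fin n)))
    (hB : IsAntichain (· ⊆ ·) (ℬ : Set (Finset (Fin n)))) :
    ∑ A ∈ ℬ, (1 : ℝ) / (n.choose A.card : ℝ) ≤ 1 := by
  have key := Finset.sum_card_slice_div_choose_le_one (𝕜 := ℝ) hB
  rw [Fintype.card_fin] at key
  refine le_trans (le_of_eq ?_) key
  rw [← Finset.sum_fiberwise_of_maps_to (g := fun A : Finset (Fin n) => A.card)
      (t := Finset.range (n + 1)) (fun A hA => Finset.mem_range.2 (Nat.lt_succ_of_le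
        (by simpa using Finset.card_le_card (Finset.subset_univ A))))]
  refine Finset.sum_congr rfl fun r _ => ?_
  have hslice : ℬ.filter (fun A => A.card = r) = ℬ # r := rfl
  rw [hslice]
  have : ∀ A ∈ ℬ # r, (1:ℝ)/(n.choose A.card : ℝ) = 1/(n.choose r : ℝ) := fun A hA => by
    rw [(Finset.mem_slice.1 hA).2]
  rw [Finset.sum_congr rfl this, Finset.sum_const, nsmul_eq_mul]
  ring

/-- **LYM inequality for `(k+1)`-chain-free families.** If `𝒜 ⊆ 2^[n]` contains no `(k+1)`-chain,
then `∑_{A ∈ 𝒜} 1/C(n,|A|) ≤ k`. -/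
theorem chain_free_LYM {n k : ℕ} (𝒜 : Finset (Finset (Fin n)))
    (h : ¬ ∃ f : Fin (k + 1) → Finset (Fin n), StrictMono f ∧ ∀ i, f i ∈ 𝒜) :
    ∑ A ∈ 𝒜, (1 : ℝ) / (n.choose A.card : ℝ) ≤ (k : ℝ) := by
  induction k generalizing 𝒜 with
  | zero =>
    have : 𝒜 = ∅ := by
      by_contra hne
      obtain ⟨A, hA⟩ := Finset.nonempty_of_ne_empty hne
      exact h ⟨fun _ => A, @Subsingleton.strictMono _ _ _ _ (by exact Fin.subsingleton_one) _, fun _ => hA⟩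
    simp [this]
  | succ k ih =>
    set M := 𝒜.filter (fun A => ∀ B ∈ 𝒜, ¬ A ⊂ B) with hM
    have hManti : IsAntichain (· ⊆ ·) (M : Set (Finset (Fin n))) := by
      intro A hA B hB hne hsub
      simp only [hM, Finset.coe_filter, Set.mem_setOf_eq] at hA hB
      exact hA.2 B hB.1 (lt_of_le_of_ne hsub hne)
    have hrest : ¬ ∃ f : Fin (k + 1) → Finset (Fin n), StrictMono f ∧
        ∀ i, f i ∈ 𝒜.filter (fun A => ¬ ∀ B ∈ 𝒜, ¬ A ⊂ B) := by
      rintro ⟨f, hf, hfm⟩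
      have hlast := Finset.mem_filter.1 (hfm (Fin.last k))
      push_neg at hlast
      obtain ⟨B, hB, hBsub⟩ := hlast.2
      refine h ⟨fun i => if hi : (i : ℕ) < k + 1 then f ⟨i, hi⟩ else B, ?_, ?_⟩
      · intro i j hij
        dsimp only
        split_ifs with hi hj hj
        · exact hf (show (⟨(i:ℕ), hi⟩ : Fin (k+1)) < ⟨j, hj⟩ from hij)
        · calc f ⟨i, hi⟩ ≤ f (Fin.last k) := hf.monotone (Fin.le_last _)
            _ < B := hBsub
        · omega
        · omega
      · intro i
        dsimp only
        split_ifs with hi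
        · exact (Finset.mem_filter.1 (hfm ⟨i, hi⟩)).1
        · exact hB
    have h1 : ∑ A ∈ M, (1 : ℝ) / (n.choose A.card : ℝ) ≤ 1 := antichain_lym M hManti
    have h2 := ih _ hrest
    calc ∑ A ∈ 𝒜, (1 : ℝ) / (n.choose A.card : ℝ)
        = ∑ A ∈ M, (1 : ℝ) / (n.choose A.card : ℝ)
          + ∑ A ∈ 𝒜.filter (fun A => ¬ ∀ B ∈ 𝒜, ¬ A ⊂ B), (1 : ℝ) / (n.choose A.card : ℝ) :=
          (Finset.sum_filter_add_sum_filter_not 𝒜 _ _).symm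
      _ ≤ 1 + k := add_le_add h1 h2
      _ = (k + 1 : ℕ) := by push_cast; ring
end

section
/- Let r and n be positive integers and let 𝒜 be a family of r-element subsets of {1,…,n}. Define a rational-valued function m on 𝒜 by: m(A) = n/r if A is contained in a matching of ⌊n/r⌋ pairwise disjoint sets from 𝒜, and otherwise m(A) is the size of the largest matching in 𝒜 containing A (which is then less than ⌊n/r⌋). Then the sum over all A ∈ 𝒜 of 1/m(A) is at most C(n-1, r-1). -/
/-!
Katona's cycle method. Fix a cyclic order of `[n]` and look at those of its `n` arcs of `r`
consecutive points that belong to `𝒜`; their weights `1 / m(A)` sum to at most `r`. By induction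
on `n`: if `r ∣ n`, the arcs split into `r` residue classes, each a matching, so each class has
weight at most `1`; if all `n` arcs are present, each lies in a matching of `⌊n/r⌋` arcs and has
weight `r/n`; otherwise some position starts no arc, and contracting it leaves a cycle of length
`n - 1` on which disjoint arcs stay disjoint and `⌊(n-1)/r⌋ = ⌊n/r⌋` since `r ∤ n`.
Averaging over all `n!` orderings of `[n]`, in which every `r`-set occurs equally often as an arc,
gives `∑ 1/m(A) ≤ r · C(n, r) / n = C(n-1, r-1)`.
-/

open Finset Equiv Function
open scoped Pointwise Nat

namespace LocalizedEKR

section LocalWeight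

variable {ι κ : Type*} {R : ι → ι → Prop} {q : ℕ} {c : ℚ} {S : Finset ι} {w : ι → ℚ}

theorem _root_.Set.Pairwise.injOn_of_irrefl {s : Set ι} {f : ι → κ} {R' : κ → κ → Prop}
    (h : s.Pairwise (R' on f)) (hirr : ∀ a ∈ s, ¬ R' (f a) (f a)) : s.InjOn f := by
  intro a ha b hb hab
  by_contra hne
  have := h ha hb hne
  simp only [onFun, hab] at this
  exact hirr b hb this

/-- The weights `1 / m A` of the theorem form a local weight for `R = Disjoint`, `q = ⌊n/r⌋` and
`c = r/n`. -/
def IsLocalWeight (R : ι → ι → Prop) (q : ℕ) (c : ℚ) (S : Finset ι) (w : ι → ℚ) : Prop :=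
  ∀ M ⊆ S, (M : Set ι).Pairwise R → ∀ p ∈ M, w p ≤ 1 / #M ∧ (#M = q → w p ≤ c)

theorem IsLocalWeight.mono {c' : ℚ} (hw : IsLocalWeight R q c S w) (hc : c ≤ c') :
    IsLocalWeight R q c' S w :=
  fun M hMS hM p hp => (hw M hMS hM p hp).imp_right fun h hq => (h hq).trans hc

theorem IsLocalWeight.sum_le_one (hw : IsLocalWeight R q c S w) {M : Finset ι} (hMS : M ⊆ S)
    (hM : (M : Set ι).Pairwise R) : ∑ p ∈ M, w p ≤ 1 := by
  calc ∑ p ∈ M, w p ≤ ∑ _p ∈ M, (1 / #M : ℚ) := sum_le_sum fun p hp => (hw M hMS hM p hp).1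
    _ ≤ 1 := by
      rw [sum_const, nsmul_eq_mul, mul_one_div]
      exact div_self_le_one _

theorem IsLocalWeight.comp [DecidableEq κ] {R' : κ → κ → Prop} {T : Finset κ} {w : κ → ℚ}
    (hw : IsLocalWeight R' q c T w) {f : ι → κ} (hST : ∀ a ∈ S, f a ∈ T)
    (hf : ∀ a ∈ S, ∀ b ∈ S, R a b → R' (f a) (f b)) (hirr : ∀ a ∈ S, ¬ R' (f a) (f a)) :
    IsLocalWeight R q c S (w ∘ f) := by
  intro M hMS hM p hp
  have hM' : (M : Set ι).Pairwise (R' on f) :=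
    fun a ha b hb hab => hf a (hMS ha) b (hMS hb) (hM ha hb hab)
  have hinj : Set.InjOn f M := hM'.injOn_of_irrefl fun a ha => hirr a (hMS ha)
  have hMT : M.image f ⊆ T := by
    intro _ hy
    obtain ⟨a, ha, rfl⟩ := mem_image.1 hy
    exact hST a (hMS ha)
  have := hw (M.image f) hMT (by rw [coe_image]; exact hinj.pairwise_image.2 hM') (f p)
    (mem_image_of_mem f hp)
  rwa [card_image_of_injOn hinj] at this

end LocalWeight

section ArcPositions

variable {n r : ℕ}

/-- The arcs of `r` consecutive points starting at positions `a, b < n` of the `n`-cycle are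
disjoint. For `1 ≤ r` the truncated subtraction makes exactly one disjunct possible. -/
def ArcsDisjoint (n r a b : ℕ) : Prop :=
  (r ≤ a - b ∧ a - b ≤ n - r) ∨ (r ≤ b - a ∧ b - a ≤ n - r)

theorem ArcsDisjoint.symm {a b : ℕ} : ArcsDisjoint n r a b → ArcsDisjoint n r b a := Or.symm

theorem not_arcsDisjoint_self (hr : 1 ≤ r) (a : ℕ) : ¬ ArcsDisjoint n r a a := by
  unfold ArcsDisjoint; omega

theorem arcsDisjoint_mod_add (hr : 1 ≤ r) (hn : 0 < n) {D : ℕ} (hD : r ≤ D) (hDn : D ≤ n - r)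
    (a : ℕ) : ArcsDisjoint n r (a % n) ((a + D) % n) := by
  rw [Nat.add_mod, Nat.mod_eq_of_lt (show D < n by omega)]
  have ha : a % n < n := Nat.mod_lt a hn
  generalize a % n = u at ha ⊢
  unfold ArcsDisjoint
  by_cases hwrap : u + D < n
  · rw [Nat.mod_eq_of_lt hwrap]; omega
  · rw [Nat.mod_eq_sub_mod (by omega), Nat.mod_eq_of_lt (by omega)]; omega

theorem arcsDisjoint_of_mod_eq (hrn : r ∣ n) {a b : ℕ} (ha : a < n) (hb : b < n)
    (hab : a < b) (h : a % r = b % r) : ArcsDisjoint n r a b := by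
  obtain ⟨k, hk⟩ : r ∣ b - a := (Nat.modEq_iff_dvd' hab.le).1 h
  obtain ⟨l, rfl⟩ := hrn
  have hkl : k < l := by
    by_contra! h
    have := Nat.mul_le_mul_left r h
    omega
  have : r * k ≤ r * l - r := by
    rw [← Nat.mul_sub_one]; exact Nat.mul_le_mul_left r (by omega)
  have : r ≤ r * k := Nat.le_mul_of_pos_right r (Nat.pos_of_ne_zero (by rintro rfl; omega))
  right; omega

theorem exists_arcsDisjoint_matching (hr : 1 ≤ r) (hrn : r ≤ n) {p : ℕ} (hp : p < n) :
    ∃ M ⊆ range n, p ∈ M ∧ (M : Set ℕ).Pairwise (ArcsDisjoint n r) ∧ #M = n / r := by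
  set f : ℕ → ℕ := fun k => (p + k * r) % n
  have hstep : ∀ k l, k < l → l < n / r → ArcsDisjoint n r (f k) (f l) := by
    intro k l hkl hl
    obtain ⟨d, rfl⟩ := Nat.exists_eq_add_of_lt hkl
    have hq : (k + d + 2) * r ≤ n :=
      (Nat.mul_le_mul_right r (by omega)).trans (Nat.div_mul_le_self n r)
    have := arcsDisjoint_mod_add (n := n) hr (by omega) (D := (d + 1) * r)
      (Nat.le_mul_of_pos_left r (by omega)) (by rw [Nat.le_sub_iff_add_le hrn]; nlinarith)
      (p + k * r)
    simpa only [f, show p + k * r + (d + 1) * r = p + (k + d + 1) * r by ring] using this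
  have hf : (range (n / r) : Set ℕ).Pairwise (ArcsDisjoint n r on f) := by
    intro k hk l hl hkl
    rcases hkl.lt_or_gt with h | h
    · exact hstep k l h (mem_range.1 hl)
    · exact (hstep l k h (mem_range.1 hk)).symm
  have hinj : Set.InjOn f (range (n / r)) :=
    hf.injOn_of_irrefl fun k _ => not_arcsDisjoint_self hr _
  refine ⟨(range (n / r)).image f, fun _ hy => ?_, ?_, ?_, ?_⟩
  · obtain ⟨k, -, rfl⟩ := mem_image.1 hy
    exact mem_range.2 (Nat.mod_lt _ (by omega))
  · exact mem_image.2
      ⟨0, mem_range.2 (Nat.div_pos hrn (by omega)), by simp [f, Nat.mod_eq_of_lt hp]⟩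
  · rw [coe_image]; exact hinj.pairwise_image.2 hf
  · rw [card_image_of_injOn hinj, card_range]

def skip (x y : ℕ) : ℕ := if y < x then y else y + 1

theorem skip_injective (x : ℕ) : Injective (skip x) := by
  intro a b h; unfold skip at h; split_ifs at h <;> omega

theorem mem_range_skip {x y : ℕ} (h : y ≠ x) : y ∈ Set.range (skip x) := by
  by_cases hy : y < x
  · exact ⟨y, if_pos hy⟩
  · exact ⟨y - 1, by unfold skip; split_ifs <;> omega⟩

theorem lt_of_skip_lt_succ {x y : ℕ} (hx : x ≤ n) (h : skip x y < n + 1) : y < n := by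
  unfold skip at h; split_ifs at h <;> omega

theorem ArcsDisjoint.skip {a b : ℕ} (h : ArcsDisjoint n r a b) (x : ℕ) :
    ArcsDisjoint (n + 1) r (skip x a) (skip x b) := by
  unfold ArcsDisjoint LocalizedEKR.skip at *; split_ifs <;> omega

theorem add_mod_ne_mod {c d : ℕ} (hd : 0 < d) (hdn : d < n) : (c + d) % n ≠ c % n := by
  intro h
  have : d ≡ 0 [MOD n] := Nat.ModEq.add_left_cancel' c h
  rw [Nat.ModEq, Nat.zero_mod, Nat.mod_eq_of_lt hdn] at this
  omega

end ArcPositions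

section CycleBound

variable {r : ℕ} {S : Finset ℕ} {w : ℕ → ℚ}

theorem IsLocalWeight.sum_le_of_dvd {n q : ℕ} {c : ℚ} (hr : 1 ≤ r) (hrn : r ∣ n)
    (hS : S ⊆ range n) (hw : IsLocalWeight (ArcsDisjoint n r) q c S w) : ∑ p ∈ S, w p ≤ r := by
  rw [← sum_fiberwise_of_maps_to (g := (· % r)) (t := range r)
    fun p _ => mem_range.2 (Nat.mod_lt p hr)]
  calc ∑ i ∈ range r, ∑ p ∈ S with p % r = i, w p ≤ ∑ _i ∈ range r, (1 : ℚ) :=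
        sum_le_sum fun i _ => hw.sum_le_one (filter_subset _ _) ?_
    _ = r := by simp
  intro a ha b hb hab
  rw [mem_coe, mem_filter] at ha hb
  have hmod : a % r = b % r := ha.2.trans hb.2.symm
  have ha' := mem_range.1 (hS ha.1)
  have hb' := mem_range.1 (hS hb.1)
  rcases hab.lt_or_gt with h | h
  · exact arcsDisjoint_of_mod_eq hrn ha' hb' h hmod
  · exact (arcsDisjoint_of_mod_eq hrn hb' ha' h hmod.symm).symm

theorem IsLocalWeight.sum_range_le {n : ℕ} (hr : 1 ≤ r) (hrn : r ≤ n)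
    (hw : IsLocalWeight (ArcsDisjoint n r) (n / r) (r / n) (range n) w) :
    ∑ p ∈ range n, w p ≤ r := by
  calc ∑ p ∈ range n, w p ≤ ∑ _p ∈ range n, (r / n : ℚ) := sum_le_sum fun p hp => by
        obtain ⟨M, hM, hpM, hMd, hcard⟩ := exists_arcsDisjoint_matching hr hrn (mem_range.1 hp)
        exact (hw M hM hMd p hpM).2 hcard
    _ = r := by
      have : (n : ℚ) ≠ 0 := by norm_cast; omega
      rw [sum_const, card_range, nsmul_eq_mul]; field_simp

theorem IsLocalWeight.sum_le_of_arcsDisjoint (hr : 1 ≤ r) {n : ℕ} (hrn : r ≤ n)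
    (hS : S ⊆ range n) (hw : IsLocalWeight (ArcsDisjoint n r) (n / r) (r / n) S w) :
    ∑ p ∈ S, w p ≤ r := by
  induction n generalizing S w with
  | zero => omega
  | succ n ih =>
    by_cases hdvd : r ∣ n + 1
    · exact hw.sum_le_of_dvd hr hdvd hS
    by_cases hfull : S = range (n + 1)
    · subst hfull; exact hw.sum_range_le hr hrn
    obtain ⟨x, hx, hxS⟩ := not_subset.1 fun h => hfull (hS.antisymm h)
    have hrn' : r ≤ n := Nat.le_of_lt_succ (hrn.lt_of_ne fun h => hdvd (h ▸ dvd_rfl))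
    set S' := S.preimage (skip x) (skip_injective x).injOn
    have hS' : S' ⊆ range n := fun y hy => mem_range.2 <|
      lt_of_skip_lt_succ (mem_range_succ_iff.1 hx) (mem_range.1 (hS (mem_preimage.1 hy)))
    have hw' : IsLocalWeight (ArcsDisjoint n r) (n / r) (r / n) S' (w ∘ skip x) := by
      have := hw.comp (R := ArcsDisjoint n r) (S := S') (fun y hy => mem_preimage.1 hy)
        (fun a _ b _ h => h.skip x) fun y _ => not_arcsDisjoint_self hr _
      rw [Nat.succ_div_of_not_dvd hdvd] at this
      refine this.mono (div_le_div_of_nonneg_left r.cast_nonneg ?_ (by push_cast; linarith))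
      exact_mod_cast (show 0 < n by omega)
    calc ∑ p ∈ S, w p = ∑ y ∈ S', w (skip x y) :=
          (sum_preimage _ _ _ _ fun y hy hy' =>
            absurd (mem_range_skip (ne_of_mem_of_not_mem hy hxS)) hy').symm
      _ ≤ r := ih hrn' hS' hw'

end CycleBound

def arc (n r p : ℕ) [NeZero n] : Finset (Fin n) :=
  (range r).image fun i => Fin.ofNat n (p + i)

section Arcs

variable {n r : ℕ} [NeZero n]

theorem card_arc (hrn : r ≤ n) (p : ℕ) : #(arc n r p) = r := by
  rw [arc, card_image_of_injOn, card_range]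
  intro i hi j hj hij
  simp only [coe_range, Set.mem_Iio, Fin.ext_iff, Fin.val_ofNat] at hi hj hij
  by_contra hne
  rcases lt_or_gt_of_ne hne with h | h
  · exact add_mod_ne_mod (n := n) (c := p + i) (d := j - i) (by omega) (by omega)
      (by rw [hij, show p + i + (j - i) = p + j by omega])
  · exact add_mod_ne_mod (n := n) (c := p + j) (d := i - j) (by omega) (by omega)
      (by rw [← hij, show p + j + (i - j) = p + i by omega])

theorem disjoint_arc {a b : ℕ} (ha : a < n) (hb : b < n) (h : ArcsDisjoint n r a b) :
    Disjoint (arc n r a) (arc n r b) := by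
  rw [disjoint_left]
  rintro _ hx hy
  simp only [arc, mem_image, mem_range] at hx hy
  obtain ⟨i, hi, rfl⟩ := hx
  obtain ⟨j, hj, hij⟩ := hy
  simp only [Fin.ext_iff, Fin.val_ofNat] at hij
  unfold ArcsDisjoint at h
  rcases h with h | h
  · exact add_mod_ne_mod (n := n) (c := b + j) (d := a + i - (b + j)) (by omega) (by omega)
      (by rw [hij, show b + j + (a + i - (b + j)) = a + i by omega])
  · exact add_mod_ne_mod (n := n) (c := a + i) (d := b + j - (a + i)) (by omega) (by omega)
      (by rw [← hij, show a + i + (b + j - (a + i)) = b + j by omega])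

theorem sum_perm_smul_arc_le (hr : 1 ≤ r) (hrn : r ≤ n) {𝒜 : Finset (Finset (Fin n))}
    {w : Finset (Fin n) → ℚ} (hw : IsLocalWeight Disjoint (n / r) (r / n) 𝒜 w)
    (σ : Perm (Fin n)) :
    ∑ p ∈ range n, (if σ • arc n r p ∈ 𝒜 then w (σ • arc n r p) else 0) ≤ r := by
  rw [← sum_filter]
  refine IsLocalWeight.sum_le_of_arcsDisjoint hr hrn (filter_subset _ _)
    (hw.comp (fun p hp => (mem_filter.1 hp).2) (fun a ha b hb h => ?_) fun p _ => ?_)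
  · rw [smul_finset_def, smul_finset_def]
    exact (disjoint_image (MulAction.injective σ)).2
      (disjoint_arc (mem_range.1 (mem_filter.1 ha).1) (mem_range.1 (mem_filter.1 hb).1) h)
  · rw [disjoint_self_iff_empty, ← card_eq_zero, card_smul_finset, card_arc hrn]
    omega

end Arcs

section Averaging

variable {α β : Type*} [Fintype α] [DecidableEq α] [AddCommMonoid β]

theorem card_mul_le_card_of_pairwise_disjoint {r : ℕ} {M : Finset (Finset α)}
    (hM : (M : Set (Finset α)).Pairwise Disjoint) (hcard : ∀ A ∈ M, #A = r) :
    #M * r ≤ Fintype.card α :=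
  calc #M * r = ∑ A ∈ M, #A := by rw [sum_congr rfl hcard, sum_const, smul_eq_mul]
    _ = #(M.biUnion id) := (card_biUnion hM).symm
    _ ≤ Fintype.card α := card_le_univ _

theorem sum_perm_smul_eq_of_card_eq {I J : Finset α} (h : #I = #J) (g : Finset α → β) :
    ∑ σ : Perm α, g (σ • I) = ∑ σ : Perm α, g (σ • J) := by
  have := Set.powersetCard.isPretransitive (α := α) (n := #I)
  obtain ⟨τ, hτ⟩ :=
    MulAction.exists_smul_eq (Perm α) (⟨J, h.symm⟩ : Set.powersetCard α #I) ⟨I, rfl⟩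
  have hτ : τ • J = I := by simpa using congrArg Subtype.val hτ
  simp_rw [← hτ, smul_smul]
  exact Equiv.sum_comp (Equiv.mulRight τ) fun σ => g (σ • J)

theorem choose_smul_sum_perm_smul (I : Finset α) (g : Finset α → β) :
    (Fintype.card α).choose #I • ∑ σ : Perm α, g (σ • I)
      = (Fintype.card α)! • ∑ B ∈ powersetCard #I univ, g B := by
  calc _ = ∑ J ∈ powersetCard #I univ, ∑ σ : Perm α, g (σ • J) := by
        rw [sum_congr rfl fun J hJ =>
          sum_perm_smul_eq_of_card_eq (I := J) (J := I) (mem_powersetCard_univ.1 hJ) g,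
          sum_const, card_powersetCard, card_univ]
    _ = ∑ σ : Perm α, ∑ B ∈ powersetCard #I univ, g B := by
        rw [sum_comm]
        refine sum_congr rfl fun σ _ => sum_nbij' (σ • ·) (σ⁻¹ • ·) ?_ ?_ ?_ ?_ ?_ <;>
          simp [card_smul_finset]
    _ = _ := by rw [sum_const, card_univ, Fintype.card_perm]

end Averaging

theorem sum_le_choose_of_isLocalWeight {n r : ℕ} [NeZero n] (hr : 1 ≤ r) (hrn : r ≤ n)
    {𝒜 : Finset (Finset (Fin n))} (h𝒜 : ∀ A ∈ 𝒜, #A = r) {w : Finset (Fin n) → ℚ}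
    (hw : IsLocalWeight Disjoint (n / r) (r / n) 𝒜 w) :
    ∑ A ∈ 𝒜, w A ≤ (n - 1).choose (r - 1) := by
  set g : Finset (Fin n) → ℚ := fun B => if B ∈ 𝒜 then w B else 0
  have hcycles : ∑ σ : Perm (Fin n), ∑ p ∈ range n, g (σ • arc n r p) ≤ n ! * r :=
    calc _ ≤ ∑ _σ : Perm (Fin n), (r : ℚ) :=
          sum_le_sum fun σ _ => sum_perm_smul_arc_le hr hrn hw σ
      _ = n ! * r := by simp [Fintype.card_perm]
  have havg (p : ℕ) :
      (n.choose r : ℚ) * ∑ σ : Perm (Fin n), g (σ • arc n r p) = n ! * ∑ A ∈ 𝒜, w A := by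
    have := choose_smul_sum_perm_smul (arc n r p) g
    rwa [card_arc hrn, Fintype.card_fin, nsmul_eq_mul, nsmul_eq_mul, sum_ite_mem,
      inter_eq_right.2 fun A hA => mem_powersetCard_univ.2 (h𝒜 A hA)] at this
  have hpascal : (n : ℚ) * (n - 1).choose (r - 1) = n.choose r * r := by
    have := Nat.add_one_mul_choose_eq (n - 1) (r - 1)
    rw [Nat.sub_add_cancel (by omega), Nat.sub_add_cancel hr] at this
    exact_mod_cast this
  have hkey : (n * n ! : ℚ) * ∑ A ∈ 𝒜, w A ≤ (n * n ! : ℚ) * (n - 1).choose (r - 1) :=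
    calc (n * n ! : ℚ) * ∑ A ∈ 𝒜, w A
        = ∑ p ∈ range n, n.choose r * ∑ σ : Perm (Fin n), g (σ • arc n r p) := by
          simp only [havg, sum_const, card_range, nsmul_eq_mul]; ring
      _ = n.choose r * ∑ σ : Perm (Fin n), ∑ p ∈ range n, g (σ • arc n r p) := by
          rw [← mul_sum, sum_comm]
      _ ≤ n.choose r * (n ! * r) := by gcongr
      _ = (n * n ! : ℚ) * (n - 1).choose (r - 1) := by
          linear_combination (-(n ! : ℚ)) * hpascal
  have hn : (0 : ℚ) < n := by norm_cast; omega
  exact le_of_mul_le_mul_left hkey (by positivity)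

end LocalizedEKR

open LocalizedEKR

/-- **Localized Erdős–Ko–Rado / matching theorem.** Let `𝒜` be a family of `r`-element subsets
of `[n]`. For `A ∈ 𝒜` let `m A = n/r` (as a rational) if `A` lies in a matching of `⌊n/r⌋` sets
from `𝒜`, and otherwise let `m A` be the size of the largest matching in `𝒜` containing `A`.
Then `∑_{A ∈ 𝒜} 1/m(A) ≤ C(n-1, r-1)`. -/
theorem localized_EKR {n r : ℕ} (hr : 1 ≤ r) (hrn : r ≤ n)
    (𝒜 : Finset (Finset (Fin n))) (h𝒜 : ∀ A ∈ 𝒜, A.card = r)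
    (m : Finset (Fin n) → ℚ)
    (hm1 : ∀ A ∈ 𝒜,
      (∃ M : Finset (Finset (Fin n)), M ⊆ 𝒜 ∧
          (M : Set (Finset (Fin n))).Pairwise (fun A B => Disjoint A B) ∧
          A ∈ M ∧ M.card = n / r) →
      m A = (n : ℚ) / (r : ℚ))
    (hm2 : ∀ A ∈ 𝒜,
      (¬ ∃ M : Finset (Finset (Fin n)), M ⊆ 𝒜 ∧
          (M : Set (Finset (Fin n))).Pairwise (fun A B => Disjoint A B) ∧
          A ∈ M ∧ M.card = n / r) →
      ∃ k : ℕ, m A = (k : ℚ) ∧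
        IsGreatest {j : ℕ | ∃ M : Finset (Finset (Fin n)), M ⊆ 𝒜 ∧
          (M : Set (Finset (Fin n))).Pairwise (fun A B => Disjoint A B) ∧
          A ∈ M ∧ M.card = j} k) :
    ∑ A ∈ 𝒜, 1 / m A ≤ ((n - 1).choose (r - 1) : ℚ) := by
  have : NeZero n := ⟨by omega⟩
  refine sum_le_choose_of_isLocalWeight hr hrn h𝒜 fun M hM𝒜 hM A hA => ?_
  have hMpos : (0 : ℚ) < #M := by exact_mod_cast card_pos.2 ⟨A, hA⟩
  by_cases hmax : ∃ M : Finset (Finset (Fin n)), M ⊆ 𝒜 ∧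
      (M : Set (Finset (Fin n))).Pairwise (fun A B => Disjoint A B) ∧ A ∈ M ∧ #M = n / r
  · rw [hm1 A (hM𝒜 hA) hmax, one_div_div, div_le_div_iff₀ (by norm_cast; omega) hMpos]
    have := card_mul_le_card_of_pairwise_disjoint hM fun B hB => h𝒜 B (hM𝒜 hB)
    rw [Fintype.card_fin] at this
    exact ⟨by rw [one_mul, mul_comm]; exact_mod_cast this, fun _ => le_rfl⟩
  · obtain ⟨k, hk, -, hkmax⟩ := hm2 A (hM𝒜 hA) hmax
    rw [hk]
    exact ⟨one_div_le_one_div_of_le hMpos (by exact_mod_cast hkmax ⟨M, hM𝒜, hM, hA, rfl⟩),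
      fun h => absurd ⟨M, hM𝒜, hM, hA, h⟩ hmax⟩
end

section
/- Let r < n/2 and let 𝒜 be a family of r-element subsets of {1,…,n}. Let 𝒮 be the subfamily of sets A ∈ 𝒜 such that A intersects every member of 𝒜, and let 𝒯 = 𝒜 \ 𝒮. Then |𝒮| + (r/n)·|𝒯| ≤ C(n-1, r-1). -/
/-!
Katona's cycle method. Fix a cyclic order of the ground set, i.e. a bijection `ZMod n ≃ α`, and
look at its `n` arcs of `r` consecutive points. If some arc in `𝒮` starts at `b`, every arc in `𝒜`
meets it, so it starts at `b + i - r` or `b + i` for some `i < r`; these two arcs are disjoint as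
`2r ≤ n`. Such a pair therefore holds either one arc of `𝒮` and nothing else of `𝒜`, or at most
two arcs of `𝒯`, and with weights `n` on `𝒮` and `r` on `𝒯` each pair weighs at most `n`. Hence
`n · #(arcs in 𝒮) + r · #(arcs in 𝒯) ≤ n r` for every cyclic order. Averaged over all cyclic
orders, an `r`-set is an arc `n / C(n, r)` times, so `n |𝒮| + r |𝒯| ≤ r C(n, r) = n C(n-1, r-1)`.
-/

open Finset

namespace BorgEKR

section CyclicArc

variable {n r : ℕ}

lemma natCast_zmod_inj_of_lt {a b : ℕ} (ha : a < n) (hb : b < n) :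
    (a : ZMod n) = b ↔ a = b := by
  rw [ZMod.natCast_eq_natCast_iff', Nat.mod_eq_of_lt ha, Nat.mod_eq_of_lt hb]

def cyclicArc (r : ℕ) (j : ZMod n) : Finset (ZMod n) :=
  (range r).image fun i : ℕ => j + i

lemma card_cyclicArc (hrn : r ≤ n) (j : ZMod n) : #(cyclicArc r j) = r := by
  rw [cyclicArc, card_image_of_injOn, card_range]
  intro a ha b hb hab
  simp only [coe_range, Set.mem_Iio] at ha hb
  exact (natCast_zmod_inj_of_lt (by omega) (by omega)).1 (add_left_cancel hab)

lemma exists_eq_add_sub_of_cyclicArc_inter_nonempty {b j : ZMod n}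
    (h : (cyclicArc r b ∩ cyclicArc r j).Nonempty) : ∃ k < 2 * r, j = b + k - r := by
  obtain ⟨x, hx⟩ := h
  simp only [cyclicArc, mem_inter, mem_image, mem_range] at hx
  obtain ⟨⟨v, hv, rfl⟩, u, hu, huv⟩ := hx
  refine ⟨v + r - u, by omega, ?_⟩
  rw [Nat.cast_sub (by omega), Nat.cast_add]
  linear_combination huv

lemma disjoint_cyclicArc_add (hrn : 2 * r ≤ n) (j : ZMod n) :
    Disjoint (cyclicArc r j) (cyclicArc r (j + r)) := by
  simp only [cyclicArc, disjoint_left, mem_image, mem_range]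
  rintro _ ⟨u, hu, rfl⟩ ⟨v, hv, hvu⟩
  have hcast : ((r + v : ℕ) : ZMod n) = u := by
    push_cast
    linear_combination hvu
  have := (natCast_zmod_inj_of_lt (by omega) (by omega)).1 hcast
  omega

/-- Katona's cycle bound, weighted as in Borg's theorem: `F` is the set of starts of arcs in `𝒜`
and `S` that of arcs in `𝒮`. -/
theorem mul_card_add_mul_card_sdiff_le_of_cyclicArc [NeZero n] (hrn : 2 * r ≤ n)
    {F S : Finset (ZMod n)} (hSF : S ⊆ F)
    (hS : ∀ b ∈ S, ∀ j ∈ F, (cyclicArc r b ∩ cyclicArc r j).Nonempty) :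
    n * #S + r * #(F \ S) ≤ n * r := by
  obtain rfl | ⟨b, hb⟩ := S.eq_empty_or_nonempty
  · simpa [mul_comm r] using Nat.mul_le_mul_left r (card_le_univ F |>.trans_eq (ZMod.card n))
  set w : ZMod n → ℕ := fun j => if j ∈ S then n else if j ∈ F then r else 0 with hw
  have hsum : ∑ j, w j = n * #S + r * #(F \ S) := by
    have hsplit (j : ZMod n) :
        w j = (if j ∈ S then n else 0) + (if j ∈ F \ S then r else 0) := by
      by_cases hjS : j ∈ S <;> by_cases hjF : j ∈ F <;> simp [hw, hjS, hjF]
    simp only [hsplit, sum_add_distrib, sum_ite_mem, univ_inter, sum_const, smul_eq_mul,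
      mul_comm]
  have hpair (p : ZMod n) : w p + w (p + r) ≤ n := by
    have hdis := disjoint_cyclicArc_add hrn p
    have hp : p ∈ S → p + r ∉ F := fun hp hq =>
      not_disjoint_iff_nonempty_inter.2 (hS p hp _ hq) hdis
    have hq : p + r ∈ S → p ∉ F := fun hq hp =>
      not_disjoint_iff_nonempty_inter.2 (hS _ hq p hp) hdis.symm
    simp only [hw]
    split_ifs <;> grind
  have hcover (j : ZMod n) (hj : w j ≠ 0) : j ∈ (range (2 * r)).image fun k : ℕ => b + k - r := by
    have hjF : j ∈ F := by
      by_contra hjF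
      have hjS : j ∉ S := fun h => hjF (hSF h)
      exact hj (by simp [hw, hjF, hjS])
    obtain ⟨k, hk, hjk⟩ := exists_eq_add_sub_of_cyclicArc_inter_nonempty (hS b hb j hjF)
    exact mem_image.2 ⟨k, mem_range.2 hk, hjk.symm⟩
  calc n * #S + r * #(F \ S)
      = ∑ j ∈ (range (2 * r)).image (fun k : ℕ => b + k - r), w j := by
        rw [← hsum]
        exact (sum_subset (subset_univ _) fun j _ hj => not_not.1 (mt (hcover j) hj)).symm
    _ ≤ ∑ k ∈ range (2 * r), w (b + k - r) := sum_image_le_of_nonneg fun _ _ => Nat.zero_le _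
    _ = ∑ i ∈ range r, (w (b + i - r) + w (b + i - r + r)) := by
        rw [two_mul, sum_range_add, ← sum_add_distrib]
        refine sum_congr rfl fun i _ => ?_
        congr 3
        push_cast
        ring
    _ ≤ ∑ _i ∈ range r, n := sum_le_sum fun i _ => hpair _
    _ = n * r := by rw [sum_const, card_range, smul_eq_mul, mul_comm]

end CyclicArc

section Averaging

variable {α β : Type*} [DecidableEq α]

lemma exists_perm_image_eq {s t : Finset α} (h : #s = #t) :
    ∃ σ : Equiv.Perm α, s.image σ = t := by
  have := Set.powersetCard.isPretransitive (α := α) (n := #t)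
  obtain ⟨σ, hσ⟩ := MulAction.exists_smul_eq (Equiv.Perm α)
    (Set.powersetCard.ofCard h) (Set.powersetCard.ofCard rfl)
  exact ⟨σ, by
    simpa [Set.powersetCard.ofCard, Finset.smul_finset_def] using congrArg Subtype.val hσ⟩

variable [Fintype α] [Fintype β] [DecidableEq β]

lemma card_filter_equiv_image_eq_congr (s : Finset β) {t t' : Finset α} (h : #t = #t') :
    #{e : β ≃ α | s.image e = t} = #{e : β ≃ α | s.image e = t'} := by
  obtain ⟨σ, hσ⟩ := exists_perm_image_eq h
  refine card_nbij' (fun e => e.trans σ) (fun e => e.trans σ.symm) ?_ ?_ ?_ ?_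
  · intro e he
    simp only [mem_coe, mem_filter, mem_univ, true_and] at he ⊢
    rw [Equiv.coe_trans, ← image_image, he, hσ]
  · intro e he
    simp only [mem_coe, mem_filter, mem_univ, true_and] at he ⊢
    rw [Equiv.coe_trans, ← image_image, he, ← hσ, image_image]
    simp
  · intro e _
    ext; simp
  · intro e _
    ext; simp

theorem card_filter_equiv_image_eq_mul_choose (hβα : Fintype.card β = Fintype.card α)
    (s : Finset β) {t : Finset α} (ht : #t = #s) :
    #{e : β ≃ α | s.image e = t} * (Fintype.card α).choose #s = (Fintype.card α).factorial := by
  have hfib := card_eq_sum_card_fiberwise (s := (univ : Finset (β ≃ α)))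
    (t := powersetCard #s univ) (f := fun e : β ≃ α => s.image e) fun e _ => by
      simp [card_image_of_injective _ e.injective]
  rw [card_univ, Fintype.card_equiv (Fintype.equivOfCardEq hβα), hβα,
    sum_congr rfl fun t' ht' => card_filter_equiv_image_eq_congr s
      ((mem_powersetCard_univ.1 ht').trans ht.symm), sum_const, card_powersetCard,
    card_univ, smul_eq_mul] at hfib
  rw [hfib, mul_comm]

end Averaging

variable {α : Type*} [Fintype α] [DecidableEq α] {n r : ℕ}

theorem sum_card_cyclicArc_image_mem_mul_choose [NeZero n] (hα : Fintype.card α = n)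
    (hrn : r ≤ n) (𝒢 : Finset (Finset α)) (h𝒢 : ∀ A ∈ 𝒢, #A = r) :
    (∑ e : ZMod n ≃ α, #{j | (cyclicArc r j).image e ∈ 𝒢}) * n.choose r =
      n * (#𝒢 * n.factorial) := by
  have hfib (j : ZMod n) :
      #{e : ZMod n ≃ α | (cyclicArc r j).image e ∈ 𝒢} * n.choose r = #𝒢 * n.factorial := by
    rw [card_eq_sum_card_fiberwise (f := fun e : ZMod n ≃ α => (cyclicArc r j).image e)
      (t := 𝒢) (s := {e | (cyclicArc r j).image e ∈ 𝒢}) fun e he => (mem_filter.1 he).2,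
      sum_mul, ← smul_eq_mul, ← sum_const]
    refine sum_congr rfl fun A hA => ?_
    rw [filter_filter, filter_congr fun e _ => and_iff_right_of_imp fun h => h ▸ hA]
    have := card_filter_equiv_image_eq_mul_choose (by rw [ZMod.card, hα]) (cyclicArc r j)
      ((h𝒢 A hA).trans (card_cyclicArc hrn j).symm)
    rwa [hα, card_cyclicArc hrn j] at this
  simp only [card_filter]
  rw [sum_comm, sum_mul]
  simp only [← card_filter, hfib, sum_const, card_univ, ZMod.card, smul_eq_mul]

lemma mul_choose_eq_mul_choose_pred (hr : 0 < r) (hn : 0 < n) :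
    r * n.choose r = n * (n - 1).choose (r - 1) := by
  have := Nat.add_one_mul_choose_eq (n - 1) (r - 1)
  rw [Nat.sub_add_cancel hn, Nat.sub_add_cancel hr] at this
  rw [this, mul_comm]

def intersectingCore (𝒜 : Finset (Finset α)) : Finset (Finset α) :=
  {A ∈ 𝒜 | ∀ B ∈ 𝒜, (A ∩ B).Nonempty}

theorem mul_card_intersectingCore_add_mul_card_sdiff_le (hα : Fintype.card α = n)
    (hr : 0 < r) (hrn : 2 * r ≤ n) (𝒜 : Finset (Finset α)) (h𝒜 : ∀ A ∈ 𝒜, #A = r) :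
    n * #(intersectingCore 𝒜) + r * #(𝒜 \ intersectingCore 𝒜) ≤
      n * (n - 1).choose (r - 1) := by
  have : NeZero n := ⟨by omega⟩
  set 𝒮 := intersectingCore 𝒜
  have h𝒮 : 𝒮 ⊆ 𝒜 := filter_subset _ _
  have hcycle (e : ZMod n ≃ α) :
      n * #{j | (cyclicArc r j).image e ∈ 𝒮} + r * #{j | (cyclicArc r j).image e ∈ 𝒜 \ 𝒮} ≤
        n * r := by
    have hsdiff : (univ.filter fun j : ZMod n => (cyclicArc r j).image e ∈ 𝒜 \ 𝒮) =
        univ.filter (fun j : ZMod n => (cyclicArc r j).image e ∈ 𝒜) \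
          univ.filter (fun j : ZMod n => (cyclicArc r j).image e ∈ 𝒮) := by
      ext; simp
    rw [hsdiff]
    refine mul_card_add_mul_card_sdiff_le_of_cyclicArc hrn
      (monotone_filter_right _ fun _ _ h => h𝒮 h) fun b hb j hj => ?_
    have hbj := (mem_filter.1 (mem_filter.1 hb).2).2 _ (mem_filter.1 hj).2
    rwa [← image_inter _ _ e.injective, image_nonempty] at hbj
  have hsum := sum_le_sum fun e (_ : e ∈ univ) => hcycle e
  rw [sum_add_distrib, ← mul_sum, ← mul_sum, sum_const, card_univ,
    Fintype.card_equiv (Fintype.equivOfCardEq (by rw [ZMod.card, hα])), ZMod.card,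
    smul_eq_mul] at hsum
  have hmul := Nat.mul_le_mul_right (n.choose r) hsum
  rw [add_mul, mul_assoc, mul_assoc,
    sum_card_cyclicArc_image_mem_mul_choose hα (by omega) 𝒮 fun A hA => h𝒜 A (h𝒮 hA),
    sum_card_cyclicArc_image_mem_mul_choose hα (by omega) (𝒜 \ 𝒮)
      fun A hA => h𝒜 A (mem_sdiff.1 hA).1,
    mul_assoc, mul_assoc, mul_choose_eq_mul_choose_pred hr (by omega)] at hmul
  refine Nat.le_of_mul_le_mul_left (c := n * n.factorial) ?_
    (Nat.mul_pos (by omega) n.factorial_pos)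
  linarith

end BorgEKR

/-- **Borg's generalization of the Erdős–Ko–Rado theorem.** Let `r < n/2` and let `𝒜` be a
family of `r`-element subsets of `[n]`. If `𝒮` is the subfamily of sets intersecting every
member of `𝒜` and `𝒯 = 𝒜 \ 𝒮`, then `|𝒮| + (r/n)·|𝒯| ≤ C(n-1, r-1)`. -/
theorem borg_EKR {n r : ℕ} (hr : 0 < r) (hrn : 2 * r < n)
    (𝒜 : Finset (Finset (Fin n))) (h𝒜 : ∀ A ∈ 𝒜, A.card = r) :
    ((𝒜.filter fun A => ∀ B ∈ 𝒜, (A ∩ B).Nonempty).card : ℝ) +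
      (r : ℝ) / (n : ℝ) *
        ((𝒜 \ 𝒜.filter fun A => ∀ B ∈ 𝒜, (A ∩ B).Nonempty).card : ℝ) ≤
      ((n - 1).choose (r - 1) : ℝ) := by
  have hn : (0 : ℝ) < n := Nat.cast_pos.2 (by omega)
  have key := BorgEKR.mul_card_intersectingCore_add_mul_card_sdiff_le (Fintype.card_fin n) hr
    hrn.le 𝒜 h𝒜
  rw [← mul_le_mul_iff_right₀ hn, mul_add, ← mul_assoc, mul_div_cancel₀ _ hn.ne']
  exact_mod_cast key
end

section
/- Let r and n be positive integers, let 𝒜 be a family of r-element subsets of {1,…,n}, and define m(A) as in the localized Erdős–Ko–Rado theorem: m(A) = n/r if A lies in a matching of ⌊n/r⌋ sets from 𝒜, and otherwise m(A) is the size of the largest matching in 𝒜 containing A. Let σ be a cyclic ordering of {1,…,n} and let 𝒜^σ be the collection of sets in 𝒜 whose elements are consecutive in σ (intervals in σ). Then the sum over all A ∈ 𝒜^σ of 1/m(A) is at most r. -/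
/-!
Identify the starting points of the intervals in `𝒜^σ` with a set `S` of `p` positions on the
cycle `ℤ/n`, and write `p = τ r + ρ` with `0 ≤ ρ < r`. Taking every `r`-th point of `S`,
cyclically from any `x ∈ S`, gives `τ` pairwise disjoint intervals through `x`, so `m ≥ τ` on `S`.
If `τ ≥ ⌊n/r⌋` every term equals `r/n` and the sum is `p r / n ≤ r`. Otherwise pad `S` to
`(τ+1) r` positions and split their ranks into the `r` residue classes mod `r`: each class gives
`τ + 1` pairwise disjoint intervals, and at most `r - ρ` classes contain a padding point, so at
least `ρ (τ+1)` points of `S` have `m ≥ τ + 1`. Then, for `τ > 0`,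
`∑ 1/m ≤ ρ (τ+1)/(τ+1) + (p - ρ(τ+1))/τ = r`; for `τ = 0` every term is at most `1` and `p < r`.
-/

open Finset Function

namespace CyclicIntervals

theorem mul_sum_one_div_le_card {ι : Type*} (T : Finset ι) (w : ι → ℚ) {c : ℚ} (hc : 0 ≤ c)
    (hcw : ∀ i ∈ T, c ≤ w i) : c * ∑ i ∈ T, 1 / w i ≤ #T := by
  rw [mul_sum, ← nsmul_one]
  refine sum_le_card_nsmul _ _ _ fun i hi => ?_
  rcases hc.eq_or_lt with rfl | hpos
  · simp
  · rw [mul_one_div, div_le_one (hpos.trans_le (hcw i hi))]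
    exact hcw i hi

theorem sum_one_div_le_of_card {ι : Type*} {S U : Finset ι} (w : ι → ℚ) {r τ ρ : ℕ}
    (hUS : U ⊆ S) (hS : #S = τ * r + ρ) (hρ : ρ ≤ r) (hU : ρ * (τ + 1) ≤ #U)
    (hw : ∀ i ∈ S, 1 ≤ w i ∧ (τ : ℚ) ≤ w i) (hwU : ∀ i ∈ U, (τ + 1 : ℚ) ≤ w i) :
    ∑ i ∈ S, 1 / w i ≤ r := by
  classical
  have hcard : (#(S \ U) : ℚ) = #S - #U := by
    rw [card_sdiff_of_subset hUS, Nat.cast_sub (card_le_card hUS)]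
  have hX1 := mul_sum_one_div_le_card (S \ U) w zero_le_one fun i hi => (hw i (sdiff_subset hi)).1
  have hXτ := mul_sum_one_div_le_card (S \ U) w τ.cast_nonneg fun i hi =>
    (hw i (sdiff_subset hi)).2
  have hY := mul_sum_one_div_le_card U w (by positivity) hwU
  have hS' : (#S : ℚ) = τ * r + ρ := by exact_mod_cast hS
  have hU' : (ρ : ℚ) * (τ + 1) ≤ #U := by exact_mod_cast hU
  have hρ' : (ρ : ℚ) ≤ r := by exact_mod_cast hρ
  rw [← sum_sdiff hUS]
  set X := ∑ i ∈ S \ U, 1 / w i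
  set Y := ∑ i ∈ U, 1 / w i
  rw [hcard] at hX1 hXτ
  rcases Nat.eq_zero_or_pos τ with hτ | hτ
  · subst hτ
    simp only [CharP.cast_eq_zero, zero_mul, zero_add, mul_one, one_mul] at hS' hU' hY hX1
    linarith
  · have hτ' : (0 : ℚ) < τ := by exact_mod_cast hτ
    have hscaled : (τ : ℚ) * (τ + 1) * (X + Y) ≤ τ * (τ + 1) * r := by
      nlinarith [mul_le_mul_of_nonneg_left hXτ (by positivity : (0 : ℚ) ≤ τ + 1),
        mul_le_mul_of_nonneg_left hY hτ'.le]
    exact le_of_mul_le_mul_left hscaled (by positivity)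

theorem _root_.StrictMono.apply_add_sub_le_apply {N : ℕ} {f : Fin N → ℕ} (hf : StrictMono f)
    {i j : Fin N} (hij : i ≤ j) : f i + (j - i : ℕ) ≤ f j := by
  obtain ⟨d, hd⟩ := Nat.exists_eq_add_of_le (Fin.le_def.1 hij)
  induction d generalizing j with
  | zero => simp [Fin.ext (by simpa using hd)]
  | succ d ih =>
    have hj' : (i : ℕ) + d < N := by omega
    have := ih (j := ⟨i + d, hj'⟩) (Fin.le_def.2 (by simp)) rfl
    have := hf (show (⟨i + d, hj'⟩ : Fin N) < j from Fin.lt_def.2 (by simp; omega))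
    simp only at *
    omega

/-- Positions on the cycle `ℤ/n` are encoded by naturals `a < n`; `ArcsDisjoint n r a b` says
that the arcs `{a, …, a + r - 1}` and `{b, …, b + r - 1}` of `ℤ/n` are disjoint. -/
def ArcsDisjoint (n r a b : ℕ) : Prop := r + min a b ≤ max a b ∧ max a b + r ≤ n + min a b

def InArcMatching (n r : ℕ) (S : Finset ℕ) (a k : ℕ) : Prop :=
  ∃ K ⊆ S, a ∈ K ∧ (K : Set ℕ).Pairwise (ArcsDisjoint n r) ∧ #K = k

variable {n r : ℕ}

theorem ArcsDisjoint.symm {a b : ℕ} (h : ArcsDisjoint n r a b) : ArcsDisjoint n r b a := by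
  unfold ArcsDisjoint at *; omega

instance : Std.Symm (ArcsDisjoint n r) := ⟨fun _ _ => ArcsDisjoint.symm⟩

theorem ArcsDisjoint.ne (hr : 0 < r) {a b : ℕ} (h : ArcsDisjoint n r a b) : a ≠ b := by
  unfold ArcsDisjoint at h; omega

/-- Placing the `N`-cycle on the points `e 0 < ⋯ < e (N-1)` of the `n`-cycle only lengthens
the gaps between consecutive points. -/
theorem ArcsDisjoint.map {N : ℕ} (e : Fin N ↪o ℕ) (he : ∀ j, e j < n) {a b : Fin N}
    (h : ArcsDisjoint N r a b) : ArcsDisjoint n r (e a) (e b) := by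
  wlog hab : a ≤ b generalizing a b
  · exact (this h.symm (le_of_not_ge hab)).symm
  have hN : 0 < N := a.pos
  have hfirst := e.strictMono.apply_add_sub_le_apply
    (show ⟨0, hN⟩ ≤ a from Fin.le_def.2 (Nat.zero_le _))
  have hgap := e.strictMono.apply_add_sub_le_apply hab
  have hlast := e.strictMono.apply_add_sub_le_apply
    (show b ≤ ⟨N - 1, by omega⟩ from Fin.le_def.2 (by simp; omega))
  have := he ⟨N - 1, by omega⟩
  simp only [Fin.le_def] at hab hfirst hlast
  unfold ArcsDisjoint at *
  omega

theorem inArcMatching_one {S : Finset ℕ} {a : ℕ} (ha : a ∈ S) : InArcMatching n r S a 1 :=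
  ⟨{a}, singleton_subset_iff.2 ha, mem_singleton_self a, by simp, card_singleton a⟩

theorem inArcMatching_of_pairwise {ι : Type*} [Fintype ι] (hr : 0 < r) {S : Finset ℕ}
    {f : ι → ℕ} (hfS : ∀ i, f i ∈ S) (hf : Pairwise (ArcsDisjoint n r on f)) (i : ι) :
    InArcMatching n r S (f i) (Fintype.card ι) := by
  classical
  have hinj : f.Injective := fun i j hij => by_contra fun hne => (hf hne).ne hr hij
  refine ⟨univ.image f, fun a ha => ?_, mem_image_of_mem f (mem_univ i), ?_,
    by rw [card_image_of_injective _ hinj, card_univ]⟩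
  · obtain ⟨j, -, rfl⟩ := mem_image.1 ha
    exact hfS j
  · rw [coe_image, coe_univ, Set.image_univ]
    exact hf.range_pairwise

theorem inArcMatching_of_mul_le_card (hr : 0 < r) {V : Finset ℕ} (hV : ∀ a ∈ V, a < n)
    {x τ : ℕ} (hx : x ∈ V) (hτ : 0 < τ) (hτV : τ * r ≤ #V) : InArcMatching n r V x τ := by
  set e := V.orderEmbOfFin rfl
  obtain ⟨i, rfl⟩ : ∃ i, e i = x := by
    rw [← Set.mem_range, range_orderEmbOfFin]; exact hx
  -- the index of the `k`-th point of `V` after `e i`, counting in steps of `r` around the cycle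
  let idx (k : Fin τ) : Fin #V :=
    ⟨if (i : ℕ) + k * r < #V then i + k * r else i + k * r - #V, by
      have := Nat.mul_le_mul_right r (Nat.succ_le_of_lt k.2)
      rw [Nat.succ_mul] at this
      split <;> omega⟩
  have hidx : Pairwise (ArcsDisjoint #V r on fun k => (idx k : ℕ)) := by
    refine (Std.Symm.pairwise_on _).2 fun k l hlt => ?_
    have hkl := Nat.mul_le_mul_right r (Nat.succ_le_of_lt hlt)
    have hlτ := Nat.mul_le_mul_right r (Nat.succ_le_of_lt l.2)
    rw [Nat.succ_mul] at hkl hlτ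
    have := i.2
    simp only [idx, ArcsDisjoint]
    split_ifs <;> omega
  have hidx0 : idx ⟨0, hτ⟩ = i := Fin.ext (by simp [idx])
  have := inArcMatching_of_pairwise (n := n) (S := V) hr (f := fun k => e (idx k))
    (fun k => orderEmbOfFin_mem V rfl _)
    (fun k l hkl => (hidx hkl).map e fun j => hV _ (orderEmbOfFin_mem V rfl j)) ⟨0, hτ⟩
  simpa [hidx0] using this

open Classical in
theorem mul_succ_le_card_filter_inArcMatching (hr : 0 < r) {V : Finset ℕ}
    (hV : ∀ a ∈ V, a < n) {τ ρ : ℕ} (hcard : #V = τ * r + ρ) (hρ : ρ ≤ r)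
    (hn : (τ + 1) * r ≤ n) :
    ρ * (τ + 1) ≤ #{a ∈ V | InArcMatching n r V a (τ + 1)} := by
  obtain ⟨W, hVW, hWn, hW⟩ := exists_subsuperset_card_eq (fun a ha => mem_range.2 (hV a ha))
    (show #V ≤ (τ + 1) * r by rw [hcard, Nat.succ_mul]; omega) (by rwa [card_range])
  set e := W.orderEmbOfFin hW
  have he : ∀ j, e j < n := fun j => mem_range.1 (hWn (orderEmbOfFin_mem W hW j))
  -- `pt c k` is the point of `W` of rank `c + r k`
  let pt (c : Fin r) (k : Fin (τ + 1)) : ℕ := e (finProdFinEquiv (k, c))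
  have hpt : ∀ c, Pairwise (ArcsDisjoint n r on pt c) := by
    refine fun c => (Std.Symm.pairwise_on _).2 fun k l hlt => ArcsDisjoint.map e he ?_
    have hkl : r * k + r ≤ r * l := Nat.mul_le_mul_left r (Nat.succ_le_of_lt hlt)
    have hlτ : r * l + r ≤ (τ + 1) * r := by
      rw [Nat.mul_comm _ r]; exact Nat.mul_le_mul_left r (Nat.succ_le_of_lt l.2)
    simp only [finProdFinEquiv_apply_val, ArcsDisjoint]
    omega
  set G : Finset (Fin r) := {c | ∀ k, pt c k ∈ V}
  have hG : ρ ≤ #G := by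
    have hcount : #V + #({j | e j ∉ V} : Finset (Fin ((τ + 1) * r))) ≤ (τ + 1) * r := by
      calc #V + _ ≤ #({j | e j ∈ V} : Finset _) + #({j | e j ∉ V} : Finset _) := by
            refine Nat.add_le_add_right (card_le_card_of_surjOn e fun y hy => ?_) _
            obtain ⟨j, rfl⟩ : y ∈ Set.range e := by rw [range_orderEmbOfFin]; exact hVW hy
            exact ⟨j, by simpa using hy, rfl⟩
        _ = (τ + 1) * r := by rw [card_filter_add_card_filter_not, card_univ, Fintype.card_fin]
    have hGc : #Gᶜ ≤ #({j | e j ∉ V} : Finset (Fin ((τ + 1) * r))) := by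
      refine card_le_card_of_surjOn (fun j => (finProdFinEquiv.symm j).2) fun c hc => ?_
      obtain ⟨k, hk⟩ : ∃ k, pt c k ∉ V := by simpa [G] using hc
      exact ⟨finProdFinEquiv (k, c), by simpa using hk, by simp⟩
    have := G.card_add_card_compl
    rw [Fintype.card_fin] at this
    have := add_one_mul τ r
    omega
  have hinj : Injective fun ck : Fin r × Fin (τ + 1) => pt ck.1 ck.2 :=
    e.injective.comp (finProdFinEquiv.injective.comp Prod.swap_injective)
  calc ρ * (τ + 1) ≤ #G * (τ + 1) := Nat.mul_le_mul_right _ hG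
    _ = #((G ×ˢ univ).image fun ck => pt ck.1 ck.2) := by
      rw [card_image_of_injective _ hinj, card_product, card_univ, Fintype.card_fin]
    _ ≤ _ := by
      refine card_le_card fun a ha => ?_
      obtain ⟨⟨c, k⟩, hck, rfl⟩ := mem_image.1 ha
      have hcG : ∀ k, pt c k ∈ V := by simpa [G] using (mem_product.1 hck).1
      refine mem_filter.2 ⟨hcG k, ?_⟩
      simpa using inArcMatching_of_pairwise hr hcG (hpt c) k

theorem sum_one_div_le_of_inArcMatching (hr : 0 < r) (hrn : r ≤ n) {S : Finset ℕ}
    (hS : ∀ a ∈ S, a < n) (w : ℕ → ℚ)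
    (hw : ∀ a ∈ S, ∀ k, k ≤ n / r → InArcMatching n r S a k → (k : ℚ) ≤ w a)
    (hcap : ∀ a ∈ S, InArcMatching n r S a (n / r) → w a = n / r) :
    ∑ a ∈ S, 1 / w a ≤ r := by
  classical
  have hq : 0 < n / r := Nat.div_pos hrn hr
  have hw1 : ∀ a ∈ S, 1 ≤ w a := fun a ha => by
    exact_mod_cast hw a ha 1 hq (inArcMatching_one ha)
  have hSn : #S ≤ n := by simpa using card_le_card fun a ha => mem_range.2 (hS a ha)
  have hdiv := (Nat.div_add_mod' #S r).symm
  set τ := #S / r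
  by_cases hcapped : n / r ≤ τ
  · have hall : ∀ a ∈ S, w a = n / r := fun a ha => hcap a ha
      (inArcMatching_of_mul_le_card hr hS ha hq ((Nat.le_div_iff_mul_le hr).1 hcapped))
    have hn : (0 : ℚ) < n := by exact_mod_cast hr.trans_le hrn
    calc ∑ a ∈ S, 1 / w a = #S * (r / n) := by
          rw [sum_congr rfl fun a ha => by rw [hall a ha, one_div_div], sum_const, nsmul_eq_mul]
      _ ≤ n * (r / n) := by gcongr
      _ = r := by field_simp
  · rw [not_le] at hcapped
    refine sum_one_div_le_of_card w (U := {a ∈ S | InArcMatching n r S a (τ + 1)})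
      (filter_subset _ _) hdiv (Nat.mod_lt _ hr).le
      (mul_succ_le_card_filter_inArcMatching hr hS hdiv (Nat.mod_lt _ hr).le
        ((Nat.mul_le_mul_right r hcapped).trans (Nat.div_mul_le_self n r)))
      (fun a ha => ⟨hw1 a ha, ?_⟩) fun a ha => ?_
    · rcases Nat.eq_zero_or_pos τ with hτ | hτ
      · rw [hτ, Nat.cast_zero]; linarith [hw1 a ha]
      · exact hw a ha τ hcapped.le
          (inArcMatching_of_mul_le_card hr hS ha hτ (Nat.div_mul_le_self _ r))
    · obtain ⟨ha, hm⟩ := mem_filter.1 ha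
      exact_mod_cast hw a ha (τ + 1) hcapped hm

variable {α : Type*} [DecidableEq α]

def arc (σ : ZMod n → α) (r a : ℕ) : Finset α :=
  univ.image fun j : Fin r => σ ((a : ZMod n) + ((j : ℕ) : ZMod n))

theorem arc_val [NeZero n] (σ : ZMod n → α) (r : ℕ) (i : ZMod n) :
    arc σ r i.val = univ.image fun j : Fin r => σ (i + ((j : ℕ) : ZMod n)) := by
  simp only [arc, ZMod.natCast_zmod_val]

theorem eq_image_filter_arc [NeZero n] {σ : ZMod n → α} {𝒜 : Finset (Finset α)}
    (h : ∀ A ∈ 𝒜, ∃ i : ZMod n, A = univ.image fun j : Fin r => σ (i + ((j : ℕ) : ZMod n))) :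
    𝒜 = {a ∈ range n | arc σ r a ∈ 𝒜}.image (arc σ r) := by
  ext A
  refine ⟨fun hA => ?_, fun hA => ?_⟩
  · obtain ⟨i, rfl⟩ := h A hA
    exact mem_image.2 ⟨i.val, mem_filter.2 ⟨mem_range.2 i.val_lt, arc_val σ r i ▸ hA⟩,
      arc_val σ r i⟩
  · obtain ⟨a, ha, rfl⟩ := mem_image.1 hA
    exact (mem_filter.1 ha).2

theorem disjoint_arc {σ : ZMod n → α} (hσ : Injective σ) {a b : ℕ} (ha : a < n)
    (hb : b < n) (h : ArcsDisjoint n r a b) : Disjoint (arc σ r a) (arc σ r b) := by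
  rw [disjoint_left]
  rintro _ hx hy
  obtain ⟨j, -, rfl⟩ := mem_image.1 hx
  obtain ⟨j', -, hj⟩ := mem_image.1 hy
  have hcast : ((b + j' : ℕ) : ZMod n) = ((a + j : ℕ) : ZMod n) := by push_cast; exact hσ hj
  rw [ZMod.natCast_eq_natCast_iff'] at hcast
  have hmod : ∀ x < 2 * n, x % n = if x < n then x else x - n := fun x hx => by
    split_ifs with hxn
    · exact Nat.mod_eq_of_lt hxn
    · rw [Nat.mod_eq_sub_mod (not_lt.1 hxn), Nat.mod_eq_of_lt (by omega)]
  have := j.2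
  have := j'.2
  unfold ArcsDisjoint at h
  rw [hmod _ (by omega), hmod _ (by omega)] at hcast
  split_ifs at hcast <;> omega

theorem exists_disjoint_arcs_of_inArcMatching (hr : 0 < r) {σ : ZMod n → α}
    (hσ : Injective σ) {𝒜 : Finset (Finset α)} {S : Finset ℕ}
    (hS : ∀ a ∈ S, a < n ∧ arc σ r a ∈ 𝒜) {a k : ℕ} (h : InArcMatching n r S a k) :
    ∃ M ⊆ 𝒜, (M : Set (Finset α)).Pairwise (fun A B => Disjoint A B) ∧
      arc σ r a ∈ M ∧ #M = k := by
  obtain ⟨K, hKS, haK, hKd, rfl⟩ := h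
  have hdisj : (K : Set ℕ).Pairwise fun a b => Disjoint (arc σ r a) (arc σ r b) :=
    fun a ha b hb hab => disjoint_arc hσ (hS a (hKS ha)).1 (hS b (hKS hb)).1 (hKd ha hb hab)
  have hinj : Set.InjOn (arc σ r) K := fun a ha b hb hab => by
    by_contra hne
    have : Disjoint (arc σ r a) (arc σ r b) := hdisj ha hb hne
    rw [← hab, disjoint_self] at this
    exact ((univ_nonempty_iff.2 ⟨⟨0, hr⟩⟩).image _).ne_empty this
  refine ⟨K.image (arc σ r), fun A hA => ?_, ?_, mem_image_of_mem _ haK,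
    card_image_of_injOn hinj⟩
  · obtain ⟨b, hb, rfl⟩ := mem_image.1 hA
    exact (hS b (hKS hb)).2
  · rw [coe_image, hinj.pairwise_image]
    exact hdisj

end CyclicIntervals

open CyclicIntervals

theorem cyclic_interval_lemma_general {n r : ℕ} (hr : 1 ≤ r) (hrn : r ≤ n)
    (𝒜 : Finset (Finset (Fin n)))
    (m : Finset (Fin n) → ℚ)
    (hm1 : ∀ A ∈ 𝒜,
      (∃ M : Finset (Finset (Fin n)), M ⊆ 𝒜 ∧
          (M : Set (Finset (Fin n))).Pairwise (fun A B => Disjoint A B) ∧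
          A ∈ M ∧ M.card = n / r) →
      m A = (n : ℚ) / (r : ℚ))
    (hm2 : ∀ A ∈ 𝒜,
      (¬ ∃ M : Finset (Finset (Fin n)), M ⊆ 𝒜 ∧
          (M : Set (Finset (Fin n))).Pairwise (fun A B => Disjoint A B) ∧
          A ∈ M ∧ M.card = n / r) →
      ∃ k : ℕ, m A = (k : ℚ) ∧
        IsGreatest {j : ℕ | ∃ M : Finset (Finset (Fin n)), M ⊆ 𝒜 ∧
          (M : Set (Finset (Fin n))).Pairwise (fun A B => Disjoint A B) ∧
          A ∈ M ∧ M.card = j} k)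
    (σ : ZMod n → Fin n) (hσ : Function.Bijective σ)
    (𝒜σ : Finset (Finset (Fin n)))
    (h𝒜σ : ∀ A : Finset (Fin n), A ∈ 𝒜σ ↔ A ∈ 𝒜 ∧
      ∃ i : ZMod n, A = Finset.image (fun j : Fin r => σ (i + ((j : ℕ) : ZMod n))) Finset.univ) :
    ∑ A ∈ 𝒜σ, 1 / m A ≤ (r : ℚ) := by
  classical
  have : NeZero n := ⟨by omega⟩
  set S := {a ∈ range n | arc σ r a ∈ 𝒜σ}
  have hS : ∀ a ∈ S, a < n ∧ arc σ r a ∈ 𝒜 := fun a ha =>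
    ⟨mem_range.1 (mem_filter.1 ha).1, ((h𝒜σ _).1 (mem_filter.1 ha).2).1⟩
  have hm : ∀ a ∈ S, ∀ k ≤ n / r, InArcMatching n r S a k → (k : ℚ) ≤ m (arc σ r a) := by
    intro a ha k hk hak
    by_cases hfull : ∃ M : Finset (Finset (Fin n)), M ⊆ 𝒜 ∧
        (M : Set (Finset (Fin n))).Pairwise (fun A B => Disjoint A B) ∧
        arc σ r a ∈ M ∧ M.card = n / r
    · rw [hm1 _ (hS a ha).2 hfull]
      exact (Nat.cast_le.2 hk).trans Nat.cast_div_le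
    · obtain ⟨k', hk', hmax⟩ := hm2 _ (hS a ha).2 hfull
      rw [hk']
      exact_mod_cast hmax.2 (exists_disjoint_arcs_of_inArcMatching hr hσ.1 hS hak)
  calc ∑ A ∈ 𝒜σ, 1 / m A ≤ ∑ a ∈ S, 1 / m (arc σ r a) := by
        rw [eq_image_filter_arc fun A hA => ((h𝒜σ A).1 hA).2]
        refine sum_image_le_of_nonneg fun A hA => ?_
        obtain ⟨a, ha, rfl⟩ := mem_image.1 hA
        have := hm a ha 1 (Nat.div_pos hrn hr) (inArcMatching_one ha)
        exact one_div_nonneg.2 (by push_cast at this; linarith)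
    _ ≤ r := sum_one_div_le_of_inArcMatching hr hrn (fun a ha => (hS a ha).1) _ hm
        fun a ha h => hm1 _ (hS a ha).2 (exists_disjoint_arcs_of_inArcMatching hr hσ.1 hS h)

/-- **Cyclic permutation lemma for the localized Erdős–Ko–Rado theorem.** Let `𝒜` be a family of
`r`-element subsets of `[n]` and define `m A` as in the localized EKR theorem. For a cyclic
ordering `σ` of `[n]` (a bijection `ZMod n → Fin n`), let `𝒜^σ` be the sets of `𝒜` which are
intervals in `σ`. Then `∑_{A ∈ 𝒜^σ} 1/m(A) ≤ r`. -/
theorem cyclic_interval_lemma {n r : ℕ} (hr : 1 ≤ r) (hrn : r ≤ n)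
    (𝒜 : Finset (Finset (Fin n))) (h𝒜 : ∀ A ∈ 𝒜, A.card = r)
    (m : Finset (Fin n) → ℚ)
    (hm1 : ∀ A ∈ 𝒜,
      (∃ M : Finset (Finset (Fin n)), M ⊆ 𝒜 ∧
          (M : Set (Finset (Fin n))).Pairwise (fun A B => Disjoint A B) ∧
          A ∈ M ∧ M.card = n / r) →
      m A = (n : ℚ) / (r : ℚ))
    (hm2 : ∀ A ∈ 𝒜,
      (¬ ∃ M : Finset (Finset (Fin n)), M ⊆ 𝒜 ∧
          (M : Set (Finset (Fin n))).Pairwise (fun A B => Disjoint A B) ∧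
          A ∈ M ∧ M.card = n / r) →
      ∃ k : ℕ, m A = (k : ℚ) ∧
        IsGreatest {j : ℕ | ∃ M : Finset (Finset (Fin n)), M ⊆ 𝒜 ∧
          (M : Set (Finset (Fin n))).Pairwise (fun A B => Disjoint A B) ∧
          A ∈ M ∧ M.card = j} k)
    (σ : ZMod n → Fin n) (hσ : Function.Bijective σ)
    (𝒜σ : Finset (Finset (Fin n)))
    (h𝒜σ : ∀ A : Finset (Fin n), A ∈ 𝒜σ ↔ A ∈ 𝒜 ∧
      ∃ i : ZMod n, A = Finset.image (fun j : Fin r => σ (i + ((j : ℕ) : ZMod n))) Finset.univ) :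
    ∑ A ∈ 𝒜σ, 1 / m A ≤ (r : ℚ) :=
  cyclic_interval_lemma_general hr hrn 𝒜 m hm1 hm2 σ hσ 𝒜σ h𝒜σ
end

section
/- Let G be a perfect graph on n vertices. Let f be a function assigning a positive real number to each pair (H, v) where H is an induced subgraph of G and v is a vertex of H, such that (i) f(H, v) ≤ f(H', v) whenever H' is obtained from H by adding one more vertex of G (with induced edges), and (ii) whenever the vertex set of H is an independent set of G, the sum over v ∈ V(H) of 1/f(H, v) is at most 1. For an induced subgraph H and v ∈ V(H), let c(H, v) be the size of the largest clique of H containing v. Then for every induced subgraph H of G, the sum over v ∈ V(H) of 1/(f(H, v)·c(H, v)) is at most 1. -/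
/-- A simple graph is perfect if for every induced subgraph, the chromatic number equals the
clique number. -/
def SimpleGraph.IsPerfect {V : Type*} (G : SimpleGraph V) : Prop :=
  ∀ S : Set V, (G.induce S).chromaticNumber = ((G.induce S).cliqueNum : ℕ∞)

/-!
Let `L` be a common multiple of the numbers `c(S, v)` and give `v ∈ S` the weight `L / c(S, v)`.
A clique `K ⊆ S` has total weight at most `L`, because `c(S, v) ≥ |K|` for `v ∈ K`. In a
perfect graph, Lovász's replication argument turns this bound into a weighted colouring: at most
`L` stable sets `I ⊆ S` such that each `v` lies in at least `L / c(S, v)` of them. Monotonicity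
of `f` gives `∑_{v ∈ I} 1/f(S, v) ≤ ∑_{v ∈ I} 1/f(I, v) ≤ 1` for each of them, so the sum in
question is at most `L / L`.

The weighted colouring is built by induction on the total weight instead of on a blown-up graph.
Suppose every clique has weight at most `k` and some `a` has weight at least 2. Colour the
weights with `a` decreased by one, using at most `k` classes, and pick a class `A ∋ a`.
Decreasing the weights on all of `A` brings the clique bound down to `k - 1`: a clique through
`a` loses weight at `a`, and one avoiding `a` is dominated by the other classes, each meeting it
at most once. Colour these weights with `k - 1` classes and add `A`.
-/

open Finset

theorem Finset.apply_le_apply_of_subset {V β : Type*} [DecidableEq V] [Preorder β]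
    {f : Finset V → V → β}
    (hf : ∀ (S : Finset V) (v w : V), v ∈ S → w ∉ S → f S v ≤ f (insert w S) v)
    {T S : Finset V} (hTS : T ⊆ S) {v : V} (hv : v ∈ T) : f T v ≤ f S v := by
  have key : ∀ D : Finset V, f T v ≤ f (T ∪ D) v := by
    intro D
    induction D using Finset.induction_on with
    | empty => simp
    | insert x D _ ih =>
      rw [union_insert]
      by_cases hx : x ∈ T ∪ D
      · rwa [insert_eq_of_mem hx]
      · exact ih.trans (hf _ v x (mem_union_left D hv) hx)
  simpa [union_sdiff_of_subset hTS] using key (S \ T)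

theorem Multiset.sum_countP_mul_le_card {α R : Type*} [DecidableEq α] [Semiring R]
    [PartialOrder R] [IsOrderedRing R] (F : Multiset (Finset α)) (S : Finset α) (g : α → R)
    (hF : ∀ I ∈ F, ∑ v ∈ S with v ∈ I, g v ≤ 1) :
    ∑ v ∈ S, (F.countP (v ∈ ·) : R) * g v ≤ card F := by
  induction F using Multiset.induction_on with
  | empty => simp
  | cons I F ih =>
    have hI := hF I (Multiset.mem_cons_self I F)
    have hrest := ih fun J hJ => hF J (Multiset.mem_cons_of_mem hJ)
    simp only [Multiset.countP_cons, Nat.cast_add, Nat.cast_ite, Nat.cast_one, Nat.cast_zero,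
      add_mul, ite_mul, one_mul, zero_mul, sum_add_distrib, Multiset.card_cons]
    rw [← sum_filter]
    exact add_le_add hrest hI

theorem Finset.sum_sub_indicator_lt {V : Type*} {S : Finset V} {A : Set V} {w : V → ℕ} {a : V}
    (haS : a ∈ S) (haA : a ∈ A) (ha : 1 ≤ w a) :
    ∑ v ∈ S, (w - A.indicator 1 : V → ℕ) v < ∑ v ∈ S, w v :=
  sum_lt_sum (fun _ _ => tsub_le_self) ⟨a, haS, by simp [haA]; omega⟩

namespace SimpleGraph

variable {V : Type*} {G : SimpleGraph V}

def WeightedCliqueBound (G : SimpleGraph V) (S : Finset V) (w : V → ℕ) (k : ℕ) : Prop :=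
  ∀ K ⊆ S, G.IsClique (K : Set V) → ∑ v ∈ K, w v ≤ k

theorem weightedCliqueBound_div {S : Finset V} {c : V → ℕ}
    (hc : ∀ K ⊆ S, G.IsClique (K : Set V) → ∀ v ∈ K, #K ≤ c v) (L : ℕ) :
    G.WeightedCliqueBound S (fun v => L / c v) L := by
  intro K hKS hK
  calc ∑ v ∈ K, L / c v ≤ ∑ _v ∈ K, L / #K :=
        sum_le_sum fun v hv => Nat.div_le_div_left (hc K hKS hK v hv) (card_pos.mpr ⟨v, hv⟩)
    _ = #K * (L / #K) := by rw [sum_const, smul_eq_mul]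
    _ ≤ L := Nat.mul_div_le L #K

variable [DecidableEq V]

def IsWeightedColoring (G : SimpleGraph V) (S : Finset V) (w : V → ℕ)
    (F : Multiset (Finset V)) : Prop :=
  (∀ I ∈ F, I ⊆ S ∧ G.IsIndepSet (I : Set V)) ∧ ∀ v ∈ S, w v ≤ F.countP (v ∈ ·)

theorem IsClique.card_filter_mem_le_one {K I : Finset V} (hK : G.IsClique (K : Set V))
    (hI : G.IsIndepSet (I : Set V)) : #{v ∈ K | v ∈ I} ≤ 1 := by
  refine card_le_one.mpr fun u hu v hv => by_contra fun huv => ?_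
  rw [mem_filter] at hu hv
  exact hI hu.2 hv.2 huv (hK hu.1 hv.1 huv)

theorem IsClique.sum_countP_le_card {K : Finset V} (hK : G.IsClique (K : Set V))
    {F : Multiset (Finset V)} (hF : ∀ I ∈ F, G.IsIndepSet (I : Set V)) :
    ∑ v ∈ K, F.countP (v ∈ ·) ≤ Multiset.card F := by
  simpa using F.sum_countP_mul_le_card K (fun _ => (1 : ℕ))
    fun I hI => by simpa using hK.card_filter_mem_le_one (hF I hI)

theorem IsPerfect.exists_weightedColoring_one (hG : G.IsPerfect) (S : Finset V) {k : ℕ}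
    (hk : G.WeightedCliqueBound S 1 k) :
    ∃ F, Multiset.card F ≤ k ∧ G.IsWeightedColoring S 1 F := by
  classical
  set H := G.induce (S : Set V)
  obtain ⟨C⟩ : H.Colorable H.cliqueNum := chromaticNumber_le_iff_colorable.mp (hG S).le
  have hωk : H.cliqueNum ≤ k := by
    obtain ⟨t, ht⟩ := H.exists_isNClique_cliqueNum
    rw [isNClique_induce_iff] at ht
    rw [← ht.card_eq]
    have htS : t.map (.subtype _) ⊆ S := fun v hv => by
      obtain ⟨x, -, rfl⟩ := mem_map.mp hv
      exact x.2
    simpa using hk _ htS ht.isClique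
  refine ⟨univ.val.map fun i => {v ∈ S | ∃ h : v ∈ S, C ⟨v, h⟩ = i}, ?_, ?_, ?_⟩
  · simpa using hωk
  · simp only [Multiset.mem_map, mem_val, mem_univ, true_and, forall_exists_index,
      forall_apply_eq_imp_iff]
    refine fun i => ⟨filter_subset _ _, fun u hu v hv huv hadj => ?_⟩
    simp only [coe_filter, Set.mem_ofPred_eq] at hu hv
    obtain ⟨hu, hu', rfl⟩ := hu
    obtain ⟨hv, hv', hvu⟩ := hv
    exact C.valid (show H.Adj ⟨u, hu⟩ ⟨v, hv⟩ from hadj) hvu.symm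
  · refine fun v hv => Multiset.countP_pos.mpr ⟨_, Multiset.mem_map_of_mem _ (mem_val.mpr
      (mem_univ (C ⟨v, hv⟩))), by simp [hv]⟩

theorem IsPerfect.exists_weightedColoring_of_le_one (hG : G.IsPerfect) {S : Finset V}
    {w : V → ℕ} {k : ℕ} (hw : ∀ v ∈ S, w v ≤ 1) (hk : G.WeightedCliqueBound S w k) :
    ∃ F, Multiset.card F ≤ k ∧ G.IsWeightedColoring S w F := by
  classical
  set S' := {v ∈ S | w v = 1}
  obtain ⟨F, hFk, hFI, hFcov⟩ := hG.exists_weightedColoring_one S' fun K hKS' hK => by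
    have hKS : K ⊆ S := hKS'.trans (filter_subset _ _)
    calc ∑ v ∈ K, (1 : V → ℕ) v = ∑ v ∈ K, w v :=
          sum_congr rfl fun v hv => ((mem_filter.mp (hKS' hv)).2).symm
      _ ≤ k := hk K hKS hK
  refine ⟨F, hFk, fun I hI => ⟨(hFI I hI).1.trans (filter_subset _ _), (hFI I hI).2⟩,
    fun v hv => ?_⟩
  by_cases hv1 : w v = 1
  · exact hv1 ▸ hFcov v (mem_filter.mpr ⟨hv, hv1⟩)
  · have := hw v hv
    omega

theorem WeightedCliqueBound.sub_indicator {S : Finset V} {w : V → ℕ} {k : ℕ} {a : V}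
    (hk : G.WeightedCliqueBound S w k) (ha : 1 ≤ w a) {F : Multiset (Finset V)}
    (hF : G.IsWeightedColoring S (w - ({a} : Set V).indicator 1) F) (hFk : Multiset.card F ≤ k)
    {A : Finset V} (hA : A ∈ F) (haA : a ∈ A) :
    G.WeightedCliqueBound S (w - (A : Set V).indicator 1) (k - 1) := by
  obtain ⟨F₀, rfl⟩ := Multiset.exists_cons_of_mem hA
  rw [Multiset.card_cons] at hFk
  intro K hKS hK
  by_cases haK : a ∈ K
  · have := Finset.sum_sub_indicator_lt haK (mem_coe.mpr haA) ha
    have := hk K hKS hK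
    omega
  · have hle : ∀ v ∈ K,
        (w - (A : Set V).indicator 1 : V → ℕ) v ≤ F₀.countP (v ∈ ·) := by
      intro v hv
      have hva : v ≠ a := ne_of_mem_of_not_mem hv haK
      have := hF.2 v (hKS hv)
      simp only [Pi.sub_apply, Set.indicator_apply, Set.mem_singleton_iff, hva, if_false,
        Multiset.countP_cons, mem_coe, Pi.one_apply] at this ⊢
      split_ifs at this ⊢ <;> omega
    calc ∑ v ∈ K, (w - (A : Set V).indicator 1 : V → ℕ) v
      _ ≤ ∑ v ∈ K, F₀.countP (v ∈ ·) := sum_le_sum hle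
      _ ≤ Multiset.card F₀ :=
          hK.sum_countP_le_card fun I hI => (hF.1 I (Multiset.mem_cons_of_mem hI)).2
      _ ≤ k - 1 := by omega

theorem IsWeightedColoring.cons {S A : Finset V} {w : V → ℕ} {F : Multiset (Finset V)}
    (hF : G.IsWeightedColoring S (w - (A : Set V).indicator 1) F) (hAS : A ⊆ S)
    (hA : G.IsIndepSet (A : Set V)) : G.IsWeightedColoring S w (A ::ₘ F) := by
  refine ⟨Multiset.forall_mem_cons.mpr ⟨⟨hAS, hA⟩, hF.1⟩, fun v hv => ?_⟩
  have := hF.2 v hv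
  simp only [Pi.sub_apply, Set.indicator_apply, mem_coe, Pi.one_apply,
    Multiset.countP_cons] at this ⊢
  split_ifs at this ⊢ <;> omega

theorem IsPerfect.exists_weightedColoring (hG : G.IsPerfect) (S : Finset V) (w : V → ℕ)
    (k : ℕ) (hk : G.WeightedCliqueBound S w k) :
    ∃ F, Multiset.card F ≤ k ∧ G.IsWeightedColoring S w F := by
  by_cases hw : ∀ v ∈ S, w v ≤ 1
  · exact hG.exists_weightedColoring_of_le_one hw hk
  push Not at hw
  obtain ⟨a, haS, ha⟩ := hw
  obtain ⟨F, hFk, hF⟩ := hG.exists_weightedColoring S (w - ({a} : Set V).indicator 1) k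
    fun K hKS hK => (sum_le_sum fun _ _ => tsub_le_self).trans (hk K hKS hK)
  obtain ⟨A, hA, haA⟩ : ∃ A ∈ F, a ∈ A := by
    have := hF.2 a haS
    simp only [Pi.sub_apply, Set.indicator_of_mem (Set.mem_singleton a), Pi.one_apply] at this
    exact Multiset.countP_pos.mp (by omega)
  obtain ⟨F', hF'k, hF'⟩ := hG.exists_weightedColoring S (w - (A : Set V).indicator 1) (k - 1)
    (hk.sub_indicator (by omega) hF hFk hA haA)
  have hk1 : 1 ≤ k := (Multiset.card_pos_iff_exists_mem.mpr ⟨A, hA⟩).trans_le hFk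
  exact ⟨A ::ₘ F', by rw [Multiset.card_cons]; omega, hF'.cons (hF.1 A hA).1 (hF.1 A hA).2⟩
termination_by ∑ v ∈ S, w v
decreasing_by
  · exact Finset.sum_sub_indicator_lt haS (Set.mem_singleton a) (by omega)
  · exact Finset.sum_sub_indicator_lt haS (mem_coe.mpr haA) (by omega)

theorem IsWeightedColoring.sum_div_le {S : Finset V} {c : V → ℕ} {L : ℕ} (hL : 0 < L)
    (hdvd : ∀ v ∈ S, c v ∣ L) {F : Multiset (Finset V)}
    (hF : G.IsWeightedColoring S (fun v => L / c v) F) (hFL : Multiset.card F ≤ L) {g : V → ℝ}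
    (hg : ∀ v ∈ S, 0 ≤ g v) (hgF : ∀ I ∈ F, ∑ v ∈ I, g v ≤ 1) :
    ∑ v ∈ S, g v / c v ≤ 1 := by
  have hL' : (0 : ℝ) < L := Nat.cast_pos.mpr hL
  calc ∑ v ∈ S, g v / c v = (∑ v ∈ S, ((L / c v : ℕ) : ℝ) * g v) / L := by
        rw [sum_div]
        refine sum_congr rfl fun v hv => ?_
        have := Nat.pos_of_dvd_of_pos (hdvd v hv) hL
        rw [Nat.cast_div (hdvd v hv) (by positivity)]
        field_simp
    _ ≤ (∑ v ∈ S, (F.countP (v ∈ ·) : ℝ) * g v) / L := by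
        gcongr with v hv
        · exact hg v hv
        · exact_mod_cast hF.2 v hv
    _ ≤ Multiset.card F / L := by
        gcongr
        refine F.sum_countP_mul_le_card S g fun I hI => ?_
        rw [filter_mem_eq_inter, inter_eq_right.mpr (hF.1 I hI).1]
        exact hgF I hI
    _ ≤ 1 := div_le_one_of_le₀ (by exact_mod_cast hFL) hL'.le

end SimpleGraph

theorem localized_perfect_weights_general {V : Type*} [DecidableEq V]
    (G : SimpleGraph V) (hG : G.IsPerfect)
    (f : Finset V → V → ℝ)
    (hfpos : ∀ (S : Finset V), ∀ v ∈ S, 0 < f S v)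
    (hfmono : ∀ (S : Finset V) (v w : V), v ∈ S → w ∉ S → f S v ≤ f (insert w S) v)
    (hfind : ∀ S : Finset V, ((S : Set V).Pairwise fun u v => ¬ G.Adj u v) →
      ∑ v ∈ S, 1 / f S v ≤ 1)
    (c : Finset V → V → ℕ)
    (hc : ∀ (S : Finset V), ∀ v ∈ S,
      IsGreatest {k : ℕ | ∃ t ⊆ S, G.IsNClique k t ∧ v ∈ t} (c S v)) :
    ∀ S : Finset V, ∑ v ∈ S, 1 / (f S v * (c S v : ℝ)) ≤ 1 := by
  intro S
  have hc_clique : ∀ K ⊆ S, G.IsClique (K : Set V) → ∀ v ∈ K, #K ≤ c S v :=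
    fun K hKS hK v hv => (hc S v (hKS hv)).2 ⟨K, hKS, ⟨hK, rfl⟩, hv⟩
  have hc_pos : ∀ v ∈ S, 0 < c S v := fun v hv =>
    hc_clique {v} (singleton_subset_iff.mpr hv) (by simp) v (mem_singleton_self v)
  set L := ∏ v ∈ S, c S v
  obtain ⟨F, hFL, hF⟩ := hG.exists_weightedColoring S (fun v => L / c S v) L
    (SimpleGraph.weightedCliqueBound_div hc_clique L)
  calc ∑ v ∈ S, 1 / (f S v * c S v) = ∑ v ∈ S, 1 / f S v / c S v :=
        sum_congr rfl fun _ _ => (div_div _ _ _).symm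
    _ ≤ 1 := hF.sum_div_le (prod_pos hc_pos) (fun v hv => dvd_prod_of_mem _ hv) hFL
        (fun v hv => (one_div_pos.mpr (hfpos S v hv)).le) fun I hI => by
      obtain ⟨hIS, hI⟩ := hF.1 I hI
      calc ∑ v ∈ I, 1 / f S v ≤ ∑ v ∈ I, 1 / f I v := sum_le_sum fun v hv =>
            one_div_le_one_div_of_le (hfpos I v hv) (apply_le_apply_of_subset hfmono hIS hv)
        _ ≤ 1 := hfind I hI

/-- **Localized weight bound for perfect graphs.** Let `G` be a perfect graph and `f` a positive
function on pairs `(H, v)` with `H` an induced subgraph (given by its vertex set `S`) and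
`v ∈ S`, such that `f` is monotone under adding a vertex to `H` and such that for every
independent set `S`, `∑_{v ∈ S} 1/f(S,v) ≤ 1`. If `c S v` is the size of the largest clique of
the subgraph induced on `S` containing `v`, then for every induced subgraph `S`,
`∑_{v ∈ S} 1/(f(S,v)·c(S,v)) ≤ 1`. -/
theorem localized_perfect_weights {V : Type*} [Fintype V] [DecidableEq V]
    (G : SimpleGraph V) (hG : G.IsPerfect)
    (f : Finset V → V → ℝ)
    (hfpos : ∀ (S : Finset V), ∀ v ∈ S, 0 < f S v)
    (hfmono : ∀ (S : Finset V) (v w : V), v ∈ S → w ∉ S → f S v ≤ f (insert w S) v)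
    (hfind : ∀ S : Finset V, ((S : Set V).Pairwise fun u v => ¬ G.Adj u v) →
      ∑ v ∈ S, 1 / f S v ≤ 1)
    (c : Finset V → V → ℕ)
    (hc : ∀ (S : Finset V), ∀ v ∈ S,
      IsGreatest {k : ℕ | ∃ t ⊆ S, G.IsNClique k t ∧ v ∈ t} (c S v)) :
    ∀ S : Finset V, ∑ v ∈ S, 1 / (f S v * (c S v : ℝ)) ≤ 1 :=
  localized_perfect_weights_general G hG f hfpos hfmono hfind c hc
end

section
/- Let P be a finite ranked poset and for i ≥ 0 let N_i be the number of elements of P of rank i; write |x| for the rank of x ∈ P. Suppose that every antichain S ⊆ P satisfies the LYM-type inequality: the sum over x ∈ S of 1/N_{|x|} is at most 1. Then for every subset T ⊆ P, the sum over x ∈ T of 1/(N_{|x|} · c(T, x)) is at most 1, where c(T, x) is the largest number of elements of a chain contained in T that passes through x. -/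
open Finset

section aux
variable {P : Type*} [PartialOrder P]

open Classical in
noncomputable def chainEndSet (T : Finset P) (x : P) : Finset (Finset P) :=
  T.powerset.filter fun C => IsChain (· ≤ ·) (C : Set P) ∧ x ∈ C ∧ ∀ y ∈ C, y ≤ x

open Classical in
noncomputable def chainStartSet (T : Finset P) (x : P) : Finset (Finset P) :=
  T.powerset.filter fun C => IsChain (· ≤ ·) (C : Set P) ∧ x ∈ C ∧ ∀ y ∈ C, x ≤ y

noncomputable def aFn (T : Finset P) (x : P) : ℕ := (chainEndSet T x).sup Finset.card
noncomputable def bFn (T : Finset P) (x : P) : ℕ := (chainStartSet T x).sup Finset.card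

lemma mem_chainEndSet {T C : Finset P} {x : P} :
    C ∈ chainEndSet T x ↔ C ⊆ T ∧ IsChain (· ≤ ·) (C : Set P) ∧ x ∈ C ∧ ∀ y ∈ C, y ≤ x := by
  classical
  simp [chainEndSet, Finset.mem_filter, Finset.mem_powerset, and_assoc]

lemma mem_chainStartSet {T C : Finset P} {x : P} :
    C ∈ chainStartSet T x ↔ C ⊆ T ∧ IsChain (· ≤ ·) (C : Set P) ∧ x ∈ C ∧ ∀ y ∈ C, x ≤ y := by
  classical
  simp [chainStartSet, Finset.mem_filter, Finset.mem_powerset, and_assoc]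

lemma le_aFn {T C : Finset P} {x : P} (h1 : C ⊆ T) (h2 : IsChain (· ≤ ·) (C : Set P))
    (h3 : x ∈ C) (h4 : ∀ y ∈ C, y ≤ x) : C.card ≤ aFn T x :=
  Finset.le_sup (mem_chainEndSet.mpr ⟨h1, h2, h3, h4⟩)

lemma le_bFn {T C : Finset P} {x : P} (h1 : C ⊆ T) (h2 : IsChain (· ≤ ·) (C : Set P))
    (h3 : x ∈ C) (h4 : ∀ y ∈ C, x ≤ y) : C.card ≤ bFn T x :=
  Finset.le_sup (mem_chainStartSet.mpr ⟨h1, h2, h3, h4⟩)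

lemma singleton_chain (x : P) : IsChain (· ≤ ·) (({x} : Finset P) : Set P) := by
  simp only [Finset.coe_singleton]
  exact Set.subsingleton_singleton.isChain

lemma exists_aFn {T : Finset P} {x : P} (hx : x ∈ T) :
    ∃ C, C ⊆ T ∧ IsChain (· ≤ ·) (C : Set P) ∧ x ∈ C ∧ (∀ y ∈ C, y ≤ x) ∧
      C.card = aFn T x := by
  have hmem : ({x} : Finset P) ∈ chainEndSet T x :=
    mem_chainEndSet.mpr ⟨Finset.singleton_subset_iff.mpr hx, singleton_chain x,
      Finset.mem_singleton_self x, fun y hy => le_of_eq (Finset.mem_singleton.mp hy)⟩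
  obtain ⟨C, hC, hsup⟩ := Finset.exists_mem_eq_sup _ ⟨_, hmem⟩ Finset.card
  obtain ⟨h1, h2, h3, h4⟩ := mem_chainEndSet.mp hC
  exact ⟨C, h1, h2, h3, h4, hsup.symm⟩

lemma exists_bFn {T : Finset P} {x : P} (hx : x ∈ T) :
    ∃ C, C ⊆ T ∧ IsChain (· ≤ ·) (C : Set P) ∧ x ∈ C ∧ (∀ y ∈ C, x ≤ y) ∧
      C.card = bFn T x := by
  have hmem : ({x} : Finset P) ∈ chainStartSet T x :=
    mem_chainStartSet.mpr ⟨Finset.singleton_subset_iff.mpr hx, singleton_chain x,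
      Finset.mem_singleton_self x, fun y hy => le_of_eq (Finset.mem_singleton.mp hy).symm⟩
  obtain ⟨C, hC, hsup⟩ := Finset.exists_mem_eq_sup _ ⟨_, hmem⟩ Finset.card
  obtain ⟨h1, h2, h3, h4⟩ := mem_chainStartSet.mp hC
  exact ⟨C, h1, h2, h3, h4, hsup.symm⟩

end aux

/-- **Localized LYM inequality for ranked posets.** Let `P` be a finite ranked (graded) poset
with `N i` elements of rank `i`, and suppose every antichain `S` satisfies the LYM-type
inequality `∑_{x ∈ S} 1/N_{|x|} ≤ 1`. Then for every `T ⊆ P`, where `c T x` is the largest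
number of elements of a chain contained in `T` passing through `x`,
`∑_{x ∈ T} 1/(N_{|x|}·c(T,x)) ≤ 1`. -/
theorem localized_LYM_ranked_poset {P : Type*} [Fintype P] [PartialOrder P] [DecidableEq P]
    [GradeOrder ℕ P]
    (N : ℕ → ℕ) (hN : ∀ i : ℕ, N i = (Finset.univ.filter fun x : P => grade ℕ x = i).card)
    (hLYM : ∀ S : Finset P, IsAntichain (· ≤ ·) (S : Set P) →
      ∑ x ∈ S, (1 : ℝ) / (N (grade ℕ x) : ℝ) ≤ 1)
    (T : Finset P) (c : P → ℕ)
    (hc : ∀ x ∈ T, IsGreatest {k : ℕ | ∃ C ⊆ T,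
      IsChain (· ≤ ·) (C : Set P) ∧ x ∈ C ∧ C.card = k} (c x)) :
    ∑ x ∈ T, (1 : ℝ) / ((N (grade ℕ x) : ℝ) * (c x : ℝ)) ≤ 1 := by
  classical
  set f : P → ℝ := fun x => (1 : ℝ) / (N (grade ℕ x) : ℝ) with hf
  set a := aFn T with ha
  set b := bFn T with hb
  -- basic bounds
  have ha1 : ∀ x ∈ T, 1 ≤ a x := by
    intro x hx
    have := le_aFn (Finset.singleton_subset_iff.mpr hx) (singleton_chain x)
      (Finset.mem_singleton_self x) (fun y hy => le_of_eq (Finset.mem_singleton.mp hy))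
    simpa using this
  have hb1 : ∀ x ∈ T, 1 ≤ b x := by
    intro x hx
    have := le_bFn (Finset.singleton_subset_iff.mpr hx) (singleton_chain x)
      (Finset.mem_singleton_self x) (fun y hy => le_of_eq (Finset.mem_singleton.mp hy).symm)
    simpa using this
  have hc1 : ∀ x ∈ T, 1 ≤ c x := by
    intro x hx
    refine (hc x hx).2 ⟨{x}, Finset.singleton_subset_iff.mpr hx, singleton_chain x,
      Finset.mem_singleton_self x, Finset.card_singleton x⟩
  -- a x + b x = c x + 1
  have hab : ∀ x ∈ T, a x + b x = c x + 1 := by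
    intro x hx
    obtain ⟨hcm, hub⟩ := hc x hx
    have h1 : c x + 1 ≤ a x + b x := by
      obtain ⟨C, hCT, hCchain, hxC, hCcard⟩ := hcm
      set C1 := C.filter (· ≤ x) with hC1
      set C2 := C.filter (x ≤ ·) with hC2
      have hunion : C1 ∪ C2 = C := by
        ext y
        simp only [hC1, hC2, Finset.mem_union, Finset.mem_filter]
        constructor
        · rintro (⟨h, -⟩ | ⟨h, -⟩) <;> exact h
        · intro hy
          rcases eq_or_ne y x with rfl | hne
          · exact Or.inl ⟨hy, le_refl _⟩
          · rcases hCchain hy hxC hne with h | h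
            · exact Or.inl ⟨hy, h⟩
            · exact Or.inr ⟨hy, h⟩
      have hinter : C1 ∩ C2 = {x} := by
        ext y
        simp only [hC1, hC2, Finset.mem_inter, Finset.mem_filter, Finset.mem_singleton]
        constructor
        · rintro ⟨⟨-, h1⟩, ⟨-, h2⟩⟩
          exact le_antisymm h1 h2
        · rintro rfl
          exact ⟨⟨hxC, le_refl _⟩, ⟨hxC, le_refl _⟩⟩
      have hcards := Finset.card_union_add_card_inter C1 C2
      rw [hunion, hinter, Finset.card_singleton, hCcard] at hcards
      have hC1a : C1.card ≤ a x := by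
        refine le_aFn ((Finset.filter_subset _ _).trans hCT)
          (hCchain.mono ?_) (Finset.mem_filter.mpr ⟨hxC, le_refl _⟩)
          (fun y hy => (Finset.mem_filter.mp hy).2)
        exact_mod_cast Finset.coe_subset.mpr (Finset.filter_subset _ _)
      have hC2b : C2.card ≤ b x := by
        refine le_bFn ((Finset.filter_subset _ _).trans hCT)
          (hCchain.mono ?_) (Finset.mem_filter.mpr ⟨hxC, le_refl _⟩)
          (fun y hy => (Finset.mem_filter.mp hy).2)
        exact_mod_cast Finset.coe_subset.mpr (Finset.filter_subset _ _)
      omega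
    have h2 : a x + b x ≤ c x + 1 := by
      obtain ⟨Ca, hCaT, hCac, hxCa, hCale, hCacard⟩ := exists_aFn hx
      obtain ⟨Cb, hCbT, hCbc, hxCb, hCble, hCbcard⟩ := exists_bFn hx
      have hinter : Ca ∩ Cb = {x} := by
        ext y
        simp only [Finset.mem_inter, Finset.mem_singleton]
        constructor
        · rintro ⟨h1, h2⟩
          exact le_antisymm (hCale y h1) (hCble y h2)
        · rintro rfl
          exact ⟨hxCa, hxCb⟩
      have hchain : IsChain (· ≤ ·) ((Ca ∪ Cb : Finset P) : Set P) := by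
        intro u hu v hv huv
        simp only [Finset.coe_union, Set.mem_union, Finset.mem_coe] at hu hv
        rcases hu with hu | hu <;> rcases hv with hv | hv
        · exact hCac hu hv huv
        · exact Or.inl ((hCale u hu).trans (hCble v hv))
        · exact Or.inr ((hCale v hv).trans (hCble u hu))
        · exact hCbc hu hv huv
      have hcards := Finset.card_union_add_card_inter Ca Cb
      rw [hinter, Finset.card_singleton, hCacard, hCbcard] at hcards
      have hmem : (Ca ∪ Cb).card ≤ c x :=
        hub ⟨Ca ∪ Cb, Finset.union_subset hCaT hCbT, hchain,
          Finset.mem_union_left _ hxCa, rfl⟩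
      rw [← ha, ← hb] at hcards
      omega
    omega
  -- monotonicity
  have hamono : ∀ x ∈ T, ∀ y ∈ T, x < y → a x + 1 ≤ a y := by
    intro x hx y hy hxy
    obtain ⟨Ca, hCaT, hCac, hxCa, hCale, hCacard⟩ := exists_aFn hx
    have hyC : y ∉ Ca := fun h => hxy.not_ge (hCale y h)
    have hchain : IsChain (· ≤ ·) ((insert y Ca : Finset P) : Set P) := by
      intro u hu v hv huv
      simp only [Finset.coe_insert, Set.mem_insert_iff, Finset.mem_coe] at hu hv
      rcases hu with rfl | hu <;> rcases hv with rfl | hv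
      · exact absurd rfl huv
      · exact Or.inr ((hCale v hv).trans hxy.le)
      · exact Or.inl ((hCale u hu).trans hxy.le)
      · exact hCac hu hv huv
    have hle : (insert y Ca).card ≤ a y := by
      refine le_aFn (Finset.insert_subset hy hCaT) hchain (Finset.mem_insert_self _ _) ?_
      intro z hz
      rcases Finset.mem_insert.mp hz with rfl | hz
      · exact le_refl _
      · exact (hCale z hz).trans hxy.le
    rw [Finset.card_insert_of_notMem hyC, hCacard, ← ha] at hle
    omega
  have hbmono : ∀ x ∈ T, ∀ y ∈ T, x < y → b y + 1 ≤ b x := by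
    intro x hx y hy hxy
    obtain ⟨Cb, hCbT, hCbc, hyCb, hCble, hCbcard⟩ := exists_bFn hy
    have hxC : x ∉ Cb := fun h => hxy.not_ge (hCble x h)
    have hchain : IsChain (· ≤ ·) ((insert x Cb : Finset P) : Set P) := by
      intro u hu v hv huv
      simp only [Finset.coe_insert, Set.mem_insert_iff, Finset.mem_coe] at hu hv
      rcases hu with rfl | hu <;> rcases hv with rfl | hv
      · exact absurd rfl huv
      · exact Or.inl (hxy.le.trans (hCble v hv))
      · exact Or.inr (hxy.le.trans (hCble u hu))
      · exact hCbc hu hv huv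
    have hle : (insert x Cb).card ≤ b x := by
      refine le_bFn (Finset.insert_subset hx hCbT) hchain (Finset.mem_insert_self _ _) ?_
      intro z hz
      rcases Finset.mem_insert.mp hz with rfl | hz
      · exact le_refl _
      · exact hxy.le.trans (hCble z hz)
    rw [Finset.card_insert_of_notMem hxC, hCbcard, ← hb] at hle
    omega
  have halec : ∀ x ∈ T, a x ≤ c x := by
    intro x hx
    have h1 := hab x hx
    have h2 := hb1 x hx
    omega
  -- the common denominator
  set M := ∏ x ∈ T, c x with hM
  have hM0 : 0 < M := Finset.prod_pos (fun x hx => hc1 x hx)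
  set d : P → ℕ := fun x => M / c x with hd
  have hcd : ∀ x ∈ T, c x * d x = M := fun x hx =>
    Nat.mul_div_cancel' (Finset.dvd_prod_of_mem c hx)
  -- the level antichains
  set S : ℕ → Finset P := fun j =>
    T.filter fun x => (a x - 1) * d x < j ∧ j ≤ a x * d x with hS
  have hanti : ∀ j, IsAntichain (· ≤ ·) ((S j : Set P)) := by
    intro j x hxS y hyS hne hxy
    simp only [hS, Finset.coe_filter, Set.mem_setOf_eq] at hxS hyS
    obtain ⟨hxT, hx1, hx2⟩ := hxS
    obtain ⟨hyT, hy1, hy2⟩ := hyS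
    have hlt : x < y := lt_of_le_of_ne hxy hne
    have hA := hamono x hxT y hyT hlt
    have hB := hbmono x hxT y hyT hlt
    have habx := hab x hxT
    have haby := hab y hyT
    have ha1x := ha1 x hxT
    have hb1y := hb1 y hyT
    -- key inequality: a x * c y ≤ (a y - 1) * c x
    have hkey : a x * c y ≤ (a y - 1) * c x := by
      obtain ⟨u, hu⟩ : ∃ u, a y = u + 1 := ⟨a y - 1, by omega⟩
      have hcy : c y = u + b y := by omega
      have hcx : a x + b y ≤ c x := by omega
      have huA : a x ≤ u := by omega
      have hu1 : a y - 1 = u := by omega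
      calc a x * c y = a x * u + a x * b y := by rw [hcy]; ring
        _ ≤ u * a x + u * b y := by
            refine Nat.add_le_add (le_of_eq (Nat.mul_comm _ _)) (Nat.mul_le_mul_right _ huA)
        _ = u * (a x + b y) := by ring
        _ ≤ u * c x := Nat.mul_le_mul_left _ hcx
        _ = (a y - 1) * c x := by rw [hu1]
    have h1 : a x * c y * (d x * d y) ≤ (a y - 1) * c x * (d x * d y) :=
      Nat.mul_le_mul_right _ hkey
    have e1 : a x * c y * (d x * d y) = (a x * d x) * M := by
      rw [← hcd y hyT]; ring
    have e2 : (a y - 1) * c x * (d x * d y) = ((a y - 1) * d y) * M := by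
      rw [← hcd x hxT]; ring
    rw [e1, e2] at h1
    have h2 : a x * d x ≤ (a y - 1) * d y := Nat.le_of_mul_le_mul_right h1 hM0
    omega
  -- counting: each x lies in exactly d x of the levels j = 1..M
  have key : ∀ x ∈ T,
      ((Finset.Icc 1 M).filter fun j => (a x - 1) * d x < j ∧ j ≤ a x * d x).card = d x := by
    intro x hx
    have h1 := ha1 x hx
    have hUM : a x * d x ≤ M := by
      calc a x * d x ≤ c x * d x := Nat.mul_le_mul_right _ (halec x hx)
        _ = M := hcd x hx
    have hULd : a x * d x = (a x - 1) * d x + d x := by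
      obtain ⟨k, hk⟩ : ∃ k, a x = k + 1 := ⟨a x - 1, by omega⟩
      rw [hk, Nat.add_sub_cancel, Nat.succ_mul]
    set L := (a x - 1) * d x with hL
    set U := a x * d x with hU
    have hfe : (Finset.Icc 1 M).filter (fun j => L < j ∧ j ≤ U) = Finset.Ioc L U := by
      ext j
      simp only [Finset.mem_filter, Finset.mem_Icc, Finset.mem_Ioc]
      omega
    rw [hfe, Nat.card_Ioc]
    omega
  -- sum over levels
  have hsum : ∑ j ∈ Finset.Icc 1 M, ∑ x ∈ S j, f x ≤ (M : ℝ) := by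
    calc ∑ j ∈ Finset.Icc 1 M, ∑ x ∈ S j, f x
        ≤ ∑ j ∈ Finset.Icc 1 M, (1 : ℝ) :=
          Finset.sum_le_sum fun j _ => hLYM (S j) (hanti j)
      _ = (M : ℝ) := by simp [Nat.card_Icc]
  have hswap : ∑ j ∈ Finset.Icc 1 M, ∑ x ∈ S j, f x = ∑ x ∈ T, (d x : ℝ) * f x := by
    calc ∑ j ∈ Finset.Icc 1 M, ∑ x ∈ S j, f x
        = ∑ j ∈ Finset.Icc 1 M, ∑ x ∈ T,
            if (a x - 1) * d x < j ∧ j ≤ a x * d x then f x else 0 := by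
          refine Finset.sum_congr rfl fun j _ => ?_
          rw [hS]
          exact Finset.sum_filter _ _
      _ = ∑ x ∈ T, ∑ j ∈ Finset.Icc 1 M,
            if (a x - 1) * d x < j ∧ j ≤ a x * d x then f x else 0 := Finset.sum_comm
      _ = ∑ x ∈ T, (d x : ℝ) * f x := by
          refine Finset.sum_congr rfl fun x hx => ?_
          rw [← Finset.sum_filter, Finset.sum_const, key x hx, nsmul_eq_mul]
  have hfinal : ∑ x ∈ T, (M : ℝ) * ((1 : ℝ) / ((N (grade ℕ x) : ℝ) * (c x : ℝ))) ≤ (M : ℝ) := by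
    have heq : ∀ x ∈ T,
        (M : ℝ) * ((1 : ℝ) / ((N (grade ℕ x) : ℝ) * (c x : ℝ))) = (d x : ℝ) * f x := by
      intro x hx
      have hc0 : (c x : ℝ) ≠ 0 := by
        have := hc1 x hx; positivity
      have hdM : (d x : ℝ) = (M : ℝ) / (c x : ℝ) := by
        have := hcd x hx
        field_simp
        exact_mod_cast (Nat.mul_comm (c x) (d x) ▸ this)
      rw [hdM, hf]
      field_simp
    rw [Finset.sum_congr rfl heq, ← hswap]
    exact hsum
  rw [← Finset.mul_sum] at hfinal
  exact (mul_le_iff_le_one_right (by exact_mod_cast hM0 : (0 : ℝ) < (M : ℝ))).mp hfinal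
end

section
/- Let P be a finite poset. For each x ∈ P, let C(x) be the largest size of a chain of P containing x and A(x) the largest size of an antichain of P containing x. Then the sum over all x ∈ P of 1/(A(x)·C(x)) is at most 1. -/
open Finset

section Aux
variable {P : Type*} [Fintype P] [PartialOrder P]

open Classical in
/-- max size of a chain with greatest element `x` -/
noncomputable def hgtAux (x : P) : ℕ :=
  Finset.sup (Finset.univ.filter (fun s : Finset P =>
    IsChain (· ≤ ·) (s : Set P) ∧ x ∈ s ∧ ∀ y ∈ s, y ≤ x)) Finset.card

open Classical in
/-- max size of a chain with least element `x` -/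
noncomputable def dptAux (x : P) : ℕ :=
  Finset.sup (Finset.univ.filter (fun s : Finset P =>
    IsChain (· ≤ ·) (s : Set P) ∧ x ∈ s ∧ ∀ y ∈ s, x ≤ y)) Finset.card

lemma le_hgtAux {x : P} {s : Finset P} (h1 : IsChain (· ≤ ·) (s : Set P)) (h2 : x ∈ s)
    (h3 : ∀ y ∈ s, y ≤ x) : s.card ≤ hgtAux x := by
  classical
  exact Finset.le_sup (f := Finset.card)
    (by simp only [Finset.mem_filter, Finset.mem_univ, true_and]; exact ⟨h1, h2, h3⟩)

lemma le_dptAux {x : P} {s : Finset P} (h1 : IsChain (· ≤ ·) (s : Set P)) (h2 : x ∈ s)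
    (h3 : ∀ y ∈ s, x ≤ y) : s.card ≤ dptAux x := by
  classical
  exact Finset.le_sup (f := Finset.card)
    (by simp only [Finset.mem_filter, Finset.mem_univ, true_and]; exact ⟨h1, h2, h3⟩)

lemma hgtAux_spec (x : P) : ∃ s : Finset P, IsChain (· ≤ ·) (s : Set P) ∧ x ∈ s ∧
    (∀ y ∈ s, y ≤ x) ∧ s.card = hgtAux x := by
  classical
  obtain ⟨s, hs, h⟩ := Finset.exists_mem_eq_sup
    (Finset.univ.filter (fun s : Finset P =>
      IsChain (· ≤ ·) (s : Set P) ∧ x ∈ s ∧ ∀ y ∈ s, y ≤ x))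
    ⟨{x}, by simp [Set.Subsingleton.isChain Set.subsingleton_singleton]⟩ Finset.card
  simp only [Finset.mem_filter] at hs
  refine ⟨s, hs.2.1, hs.2.2.1, hs.2.2.2, ?_⟩
  rw [hgtAux]; convert h.symm using 2

lemma dptAux_spec (x : P) : ∃ s : Finset P, IsChain (· ≤ ·) (s : Set P) ∧ x ∈ s ∧
    (∀ y ∈ s, x ≤ y) ∧ s.card = dptAux x := by
  classical
  obtain ⟨s, hs, h⟩ := Finset.exists_mem_eq_sup
    (Finset.univ.filter (fun s : Finset P =>
      IsChain (· ≤ ·) (s : Set P) ∧ x ∈ s ∧ ∀ y ∈ s, x ≤ y))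
    ⟨{x}, by simp [Set.Subsingleton.isChain Set.subsingleton_singleton]⟩ Finset.card
  simp only [Finset.mem_filter] at hs
  refine ⟨s, hs.2.1, hs.2.2.1, hs.2.2.2, ?_⟩
  rw [dptAux]; convert h.symm using 2

lemma one_le_hgtAux (x : P) : 1 ≤ hgtAux x := by
  have := le_hgtAux (x := x) (s := {x})
    (by simpa using Set.Subsingleton.isChain Set.subsingleton_singleton)
    (by simp) (by simp)
  simpa using this

lemma one_le_dptAux (x : P) : 1 ≤ dptAux x := by
  have := le_dptAux (x := x) (s := {x})
    (by simpa using Set.Subsingleton.isChain Set.subsingleton_singleton)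
    (by simp) (by simp)
  simpa using this

/-- strict monotonicity of height -/
lemma hgtAux_lt {x y : P} (hxy : x < y) : hgtAux x + 1 ≤ hgtAux y := by
  classical
  obtain ⟨s, hch, hx, hle, hcard⟩ := hgtAux_spec x
  have hy : y ∉ s := fun hy => hxy.not_ge (hle y hy)
  have hch' : IsChain (· ≤ ·) ((insert y s : Finset P) : Set P) := by
    intro a ha b hb hne
    simp only [Finset.coe_insert, Set.mem_insert_iff, Finset.mem_coe] at ha hb
    rcases ha with rfl | ha
    · rcases hb with rfl | hb
      · exact absurd rfl hne
      · exact Or.inr ((hle b hb).trans hxy.le)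
    · rcases hb with rfl | hb
      · exact Or.inl ((hle a ha).trans hxy.le)
      · exact hch ha hb hne
  have := le_hgtAux hch' (Finset.mem_insert_self y s)
    (by intro z hz; rcases Finset.mem_insert.1 hz with rfl | hz
        · exact le_rfl
        · exact (hle z hz).trans hxy.le)
  rwa [Finset.card_insert_of_notMem hy, hcard] at this

end Aux

section Aux2
variable {P : Type*} [Fintype P] [PartialOrder P]

/-- combining a chain ending at `x` with one starting at `y > x` -/
lemma combine_le {C : P → ℕ} (hC : ∀ x : P, IsGreatest {k : ℕ | ∃ s : Finset P,
      IsChain (· ≤ ·) (s : Set P) ∧ x ∈ s ∧ s.card = k} (C x))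
    {x y : P} (hxy : x < y) : hgtAux x + dptAux y ≤ C x := by
  classical
  obtain ⟨s, hch, hx, hle, hcard⟩ := hgtAux_spec x
  obtain ⟨s', hch', hy, hge, hcard'⟩ := dptAux_spec y
  have hdisj : Disjoint s s' := by
    rw [Finset.disjoint_left]
    intro z hz hz'
    exact absurd ((hle z hz).trans_lt (hxy.trans_le (hge z hz'))) (lt_irrefl z)
  have hchain : IsChain (· ≤ ·) ((s ∪ s' : Finset P) : Set P) := by
    intro a ha b hb hne
    simp only [Finset.coe_union, Set.mem_union, Finset.mem_coe] at ha hb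
    rcases ha with ha | ha <;> rcases hb with hb | hb
    · exact hch ha hb hne
    · exact Or.inl ((hle a ha).trans (hxy.le.trans (hge b hb)))
    · exact Or.inr ((hle b hb).trans (hxy.le.trans (hge a ha)))
    · exact hch' ha hb hne
  have hmem : (s ∪ s').card ∈ {k : ℕ | ∃ s : Finset P,
      IsChain (· ≤ ·) (s : Set P) ∧ x ∈ s ∧ s.card = k} :=
    ⟨s ∪ s', hchain, Finset.mem_union_left _ hx, rfl⟩
  have := (hC x).2 hmem
  rwa [Finset.card_union_of_disjoint hdisj, hcard, hcard'] at this

/-- a maximum chain through `y` splits at `y` -/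
lemma C_le_split {C : P → ℕ} (hC : ∀ x : P, IsGreatest {k : ℕ | ∃ s : Finset P,
      IsChain (· ≤ ·) (s : Set P) ∧ x ∈ s ∧ s.card = k} (C x))
    (y : P) : C y + 1 ≤ hgtAux y + dptAux y := by
  classical
  obtain ⟨s, hch, hy, hcard⟩ := (hC y).1
  set s₁ := s.filter (fun z => z ≤ y) with hs₁
  set s₂ := s.filter (fun z => y ≤ z) with hs₂
  have hsub₁ : (s₁ : Set P) ⊆ (s : Set P) := by
    intro z hz; simp only [hs₁, Finset.coe_filter, Set.mem_setOf_eq] at hz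
    exact hz.1
  have hsub₂ : (s₂ : Set P) ⊆ (s : Set P) := by
    intro z hz; simp only [hs₂, Finset.coe_filter, Set.mem_setOf_eq] at hz
    exact hz.1
  have hch₁ : IsChain (· ≤ ·) (s₁ : Set P) := fun a ha b hb hne => hch (hsub₁ ha) (hsub₁ hb) hne
  have hch₂ : IsChain (· ≤ ·) (s₂ : Set P) := fun a ha b hb hne => hch (hsub₂ ha) (hsub₂ hb) hne
  have h1 : s₁.card ≤ hgtAux y := by
    refine le_hgtAux hch₁ ?_ ?_
    · simp [hs₁, hy]
    · intro z hz; exact (Finset.mem_filter.1 hz).2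
  have h2 : s₂.card ≤ dptAux y := by
    refine le_dptAux hch₂ ?_ ?_
    · simp [hs₂, hy]
    · intro z hz; exact (Finset.mem_filter.1 hz).2
  have hunion : s₁ ∪ s₂ = s := by
    ext z
    simp only [Finset.mem_union, hs₁, hs₂, Finset.mem_filter]
    constructor
    · rintro (⟨hz, _⟩ | ⟨hz, _⟩) <;> exact hz
    · intro hz
      by_cases hzy : z = y
      · subst hzy; exact Or.inl ⟨hz, le_rfl⟩
      · rcases hch hz hy hzy with h | h
        · exact Or.inl ⟨hz, h⟩
        · exact Or.inr ⟨hz, h⟩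
  have hinter : s₁ ∩ s₂ = {y} := by
    ext z
    simp only [Finset.mem_inter, hs₁, hs₂, Finset.mem_filter, Finset.mem_singleton]
    constructor
    · rintro ⟨⟨_, h1⟩, ⟨_, h2⟩⟩; exact le_antisymm h1 h2
    · rintro rfl; exact ⟨⟨hy, le_rfl⟩, ⟨hy, le_rfl⟩⟩
  have := Finset.card_union_add_card_inter s₁ s₂
  rw [hunion, hinter, Finset.card_singleton, hcard] at this
  omega

end Aux2

section Aux3
variable {P : Type*} [Fintype P] [PartialOrder P]

/-- The level sets are antichains. -/
lemma levelset_antichain {C : P → ℕ} (hC : ∀ x : P, IsGreatest {k : ℕ | ∃ s : Finset P,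
      IsChain (· ≤ ·) (s : Set P) ∧ x ∈ s ∧ s.card = k} (C x))
    (N t : ℕ) (hN : 0 < N) :
    IsAntichain (· ≤ ·) {x : P | C x * t ≤ hgtAux x * N ∧ hgtAux x * N < C x * t + N} := by
  intro x hx y hy hne hle
  have hxy : x < y := lt_of_le_of_ne hle hne
  obtain ⟨hx2, _⟩ := hx
  obtain ⟨_, hy1⟩ := hy
  set a := hgtAux x with ha
  set e := hgtAux y with he
  set b := dptAux y with hb
  have h3 : a + b ≤ C x := combine_le hC hxy
  have h4 : C y + 1 ≤ e + b := C_le_split hC y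
  have h5 : a + 1 ≤ e := hgtAux_lt hxy
  have h6 : 1 ≤ b := one_le_dptAux y
  have hcx : 0 < C x := by omega
  -- from hy1 and hx2 derive C x * e < C y * a + C x
  have k0 : C x * (e * N) < C x * (C y * t + N) := mul_lt_mul_of_pos_left hy1 hcx
  have k1 : C y * (C x * t) ≤ C y * (a * N) := Nat.mul_le_mul_left _ hx2
  have k2 : C x * e * N < (C y * a + C x) * N := by ring_nf at k0 k1 ⊢; omega
  have key : C x * e < C y * a + C x := lt_of_mul_lt_mul_right k2 (Nat.zero_le N)
  -- now pure arithmetic contradiction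
  obtain ⟨e', he'⟩ : ∃ e', e = e' + 1 := ⟨e - 1, by omega⟩
  rw [he'] at key h4 h5
  have hae : a ≤ e' := by omega
  have kk1 : (a + b) * e' ≤ C x * e' := Nat.mul_le_mul_right _ h3
  have kk2 : C y * a ≤ (e' + b) * a := Nat.mul_le_mul_right _ (by omega)
  have kk3 : a * b ≤ e' * b := Nat.mul_le_mul_right _ hae
  nlinarith [kk1, kk2, kk3, key]

end Aux3

lemma levelset_count {a c m : ℕ} (ha : 1 ≤ a) (hac : a ≤ c) (hm : 1 ≤ m) :
    ((Finset.Icc 1 (c * m)).filter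
      (fun t => c * t ≤ a * (c * m) ∧ a * (c * m) < c * t + c * m)).card = m := by
  have hc : 0 < c := le_trans ha hac
  have hmam : m ≤ a * m := Nat.le_mul_of_pos_left m (by omega)
  have heq : (Finset.Icc 1 (c * m)).filter
      (fun t => c * t ≤ a * (c * m) ∧ a * (c * m) < c * t + c * m)
      = Finset.Ioc (a * m - m) (a * m) := by
    ext t
    simp only [Finset.mem_filter, Finset.mem_Icc, Finset.mem_Ioc]
    constructor
    · rintro ⟨⟨ht1, ht2⟩, hu1, hu2⟩
      have h1 : c * t ≤ c * (a * m) := by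
        calc c * t ≤ a * (c * m) := hu1
        _ = c * (a * m) := by ring
      have h2 : c * (a * m) < c * (t + m) := by
        calc c * (a * m) = a * (c * m) := by ring
        _ < c * t + c * m := hu2
        _ = c * (t + m) := by ring
      have h3 : t ≤ a * m := Nat.le_of_mul_le_mul_left h1 hc
      have h4 : a * m < t + m := Nat.lt_of_mul_lt_mul_left h2
      omega
    · rintro ⟨hl, hr⟩
      have h1 : c * t ≤ c * (a * m) := Nat.mul_le_mul_left c hr
      have h4 : a * m < t + m := by omega
      have h2 : c * (a * m) < c * (t + m) := mul_lt_mul_of_pos_left h4 hc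
      have h5 : a * m ≤ c * m := Nat.mul_le_mul_right m hac
      refine ⟨⟨by omega, by omega⟩, ?_, ?_⟩
      · calc c * t ≤ c * (a * m) := h1
        _ = a * (c * m) := by ring
      · calc a * (c * m) = c * (a * m) := by ring
        _ < c * (t + m) := h2
        _ = c * t + c * m := by ring
  rw [heq, Nat.card_Ioc]
  omega



/-- **Localized Dilworth/Mirsky-type inequality.** For a finite poset `P`, where `C x` is the
largest size of a chain containing `x` and `A x` the largest size of an antichain containing
`x`, we have `∑_{x ∈ P} 1/(A(x)·C(x)) ≤ 1`. -/
theorem localized_chain_antichain {P : Type*} [Fintype P] [PartialOrder P]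
    (C A : P → ℕ)
    (hC : ∀ x : P, IsGreatest {k : ℕ | ∃ s : Finset P,
      IsChain (· ≤ ·) (s : Set P) ∧ x ∈ s ∧ s.card = k} (C x))
    (hA : ∀ x : P, IsGreatest {k : ℕ | ∃ s : Finset P,
      IsAntichain (· ≤ ·) (s : Set P) ∧ x ∈ s ∧ s.card = k} (A x)) :
    ∑ x : P, (1 : ℝ) / ((A x : ℝ) * (C x : ℝ)) ≤ 1 := by
  classical
  set N : ℕ := ∏ x : P, C x with hNdef
  have hCpos : ∀ x : P, 1 ≤ C x := by
    intro x
    exact (hC x).2 ⟨{x}, by simpa using Set.Subsingleton.isChain Set.subsingleton_singleton,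
      by simp, by simp⟩
  have hApos : ∀ x : P, 1 ≤ A x := by
    intro x
    refine (hA x).2 ⟨{x}, ?_, by simp, by simp⟩
    simpa using Set.Subsingleton.isAntichain Set.subsingleton_singleton _
  have hNpos : 0 < N := Finset.prod_pos (fun x _ => hCpos x)
  have hdvd : ∀ x : P, C x ∣ N := fun x => Finset.dvd_prod_of_mem C (Finset.mem_univ x)
  have hhle : ∀ x : P, hgtAux x ≤ C x := by
    intro x
    obtain ⟨s, h1, h2, h3, h4⟩ := hgtAux_spec x
    exact h4 ▸ (hC x).2 ⟨s, h1, h2, rfl⟩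
  set St : ℕ → Finset P := fun t => Finset.univ.filter
    (fun x => C x * t ≤ hgtAux x * N ∧ hgtAux x * N < C x * t + N) with hStdef
  have hanti : ∀ t, IsAntichain (· ≤ ·) ((St t : Finset P) : Set P) := by
    intro t
    refine (levelset_antichain hC N t hNpos).subset ?_
    intro x hx
    simp only [hStdef, Finset.coe_filter, Set.mem_setOf_eq, Finset.mem_univ, true_and] at hx ⊢
    exact hx
  have hAcard : ∀ t, ∀ x ∈ St t, (St t).card ≤ A x :=
    fun t x hx => (hA x).2 ⟨St t, hanti t, hx, rfl⟩
  have hcount : ∀ x : P, ((Finset.Icc 1 N).filter (fun t => x ∈ St t)).card * C x = N := by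
    intro x
    obtain ⟨m, hm⟩ := hdvd x
    have hm1 : 1 ≤ m := by
      rcases Nat.eq_zero_or_pos m with h | h
      · rw [h, Nat.mul_zero] at hm; omega
      · exact h
    have hfe : (Finset.Icc 1 N).filter (fun t => x ∈ St t)
        = (Finset.Icc 1 N).filter (fun t => C x * t ≤ hgtAux x * N ∧ hgtAux x * N < C x * t + N) := by
      apply Finset.filter_congr
      intro t _
      simp only [hStdef, Finset.mem_filter, Finset.mem_univ, true_and]
    rw [hfe, hm, levelset_count (one_le_hgtAux x) (hhle x) hm1, Nat.mul_comm]
  have key : ∀ x : P, (1:ℝ)/((A x:ℝ)*(C x:ℝ)) =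
      ∑ t ∈ Finset.Icc 1 N, (if x ∈ St t then (1:ℝ)/((A x:ℝ)*(N:ℝ)) else 0) := by
    intro x
    rw [← Finset.sum_filter, Finset.sum_const, nsmul_eq_mul]
    have hc' : (((Finset.Icc 1 N).filter (fun t => x ∈ St t)).card : ℝ) * (C x : ℝ) = (N : ℝ) := by
      exact_mod_cast hcount x
    have hA0 : (0:ℝ) < A x := by exact_mod_cast hApos x
    have hC0 : (0:ℝ) < C x := by exact_mod_cast hCpos x
    have hN0 : (0:ℝ) < N := by exact_mod_cast hNpos
    rw [mul_one_div, div_eq_div_iff (by positivity) (by positivity)]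
    linear_combination (-(A x : ℝ)) * hc'
  have perT : ∀ t ∈ Finset.Icc 1 N,
      (∑ x : P, (if x ∈ St t then (1:ℝ)/((A x:ℝ)*(N:ℝ)) else 0)) ≤ 1 / (N:ℝ) := by
    intro t _
    have hN0 : (0:ℝ) < N := by exact_mod_cast hNpos
    rw [Finset.sum_ite_mem, Finset.univ_inter]
    rcases (St t).eq_empty_or_nonempty with he | hne
    · rw [he]; simp [le_of_lt hN0]
    · have hcard : 0 < (St t).card := Finset.card_pos.2 hne
      have hcard0 : (0:ℝ) < ((St t).card : ℝ) := by exact_mod_cast hcard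
      calc ∑ x ∈ St t, (1:ℝ)/((A x:ℝ)*(N:ℝ))
          ≤ ∑ x ∈ St t, (1:ℝ)/(((St t).card : ℝ)*(N:ℝ)) := by
            refine Finset.sum_le_sum fun x hx => ?_
            have h1 : ((St t).card : ℝ) ≤ (A x : ℝ) := by exact_mod_cast hAcard t x hx
            have : ((St t).card : ℝ)*(N:ℝ) ≤ (A x:ℝ)*(N:ℝ) :=
              mul_le_mul_of_nonneg_right h1 (le_of_lt hN0)
            exact one_div_le_one_div_of_le (by positivity) this
        _ = 1 / (N:ℝ) := by
            rw [Finset.sum_const, nsmul_eq_mul]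
            field_simp
  calc ∑ x : P, (1 : ℝ) / ((A x : ℝ) * (C x : ℝ))
      = ∑ x : P, ∑ t ∈ Finset.Icc 1 N, (if x ∈ St t then (1:ℝ)/((A x:ℝ)*(N:ℝ)) else 0) :=
        Finset.sum_congr rfl (fun x _ => key x)
    _ = ∑ t ∈ Finset.Icc 1 N, ∑ x : P, (if x ∈ St t then (1:ℝ)/((A x:ℝ)*(N:ℝ)) else 0) :=
        Finset.sum_comm
    _ ≤ ∑ t ∈ Finset.Icc 1 N, 1 / (N:ℝ) := Finset.sum_le_sum perT
    _ = 1 := by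
        have hN0 : (0:ℝ) < N := by exact_mod_cast hNpos
        have h1 : (N + 1 - 1 : ℕ) = N := by omega
        rw [Finset.sum_const, Nat.card_Icc, h1, nsmul_eq_mul]
        rw [mul_one_div]
        rw [div_self hN0.ne']
end
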